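/- arXiv:2209.04681 — 10 statements merged into one kernel-verified Lean document; each statement's English description precedes it below -/
import Mathlib

section
/- Let H_r be a real Hilbert space, L ⊆ H_r a closed subspace, and T : H_r → H_r a bounded, self-adjoint (symmetric), bijective linear operator. Then the subspace L + T(L) is dense in H_r if and only if T(L^⊥) ∩ L^⊥ = {0}. -/
/-!
By symmetry of `T`, `(T L)ᗮ = T⁻¹(Lᗮ)`, so `(L + T L)ᗮ = Lᗮ ∩ T⁻¹(Lᗮ)`, whose image under the
injective `T` is `T(Lᗮ) ∩ Lᗮ`. Density of `L + T L` is the vanishing of its orthogonal complement.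
-/

namespace LinearMap.IsSymmetric

variable {𝕜 E : Type*} [RCLike 𝕜] [NormedAddCommGroup E] [InnerProductSpace 𝕜 E]
  {T : E →ₗ[𝕜] E}

theorem orthogonal_map (hT : T.IsSymmetric) (K : Submodule 𝕜 E) :
    (K.map T)ᗮ = Kᗮ.comap T := by
  ext x
  simp only [Submodule.mem_orthogonal, Submodule.mem_comap, Submodule.mem_map,
    forall_exists_index, and_imp, forall_apply_eq_imp_iff₂, hT _ x]

theorem orthogonal_sup_map_eq_bot_iff (hT : T.IsSymmetric) (hTinj : Function.Injective T)
    (K : Submodule 𝕜 E) :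
    (K ⊔ K.map T)ᗮ = ⊥ ↔ Kᗮ.map T ⊓ Kᗮ = ⊥ := by
  rw [← Submodule.inf_orthogonal, hT.orthogonal_map, Submodule.map_inf_eq_map_inf_comap,
    (Submodule.map_injective_of_injective hTinj).eq_iff' (Submodule.map_bot T)]

end LinearMap.IsSymmetric

theorem dense_sum_iff_map_orthogonal_inf_orthogonal_eq_bot_general
    {H : Type*} [NormedAddCommGroup H] [InnerProductSpace ℝ H] [CompleteSpace H]
    (L : Submodule ℝ H)
    (T : H →L[ℝ] H) (hT : IsSelfAdjoint T) (hTbij : Function.Bijective T) :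
    Dense ((↑(L ⊔ L.map (T : H →ₗ[ℝ] H)) : Set H)) ↔
      Lᗮ.map (T : H →ₗ[ℝ] H) ⊓ Lᗮ = ⊥ := by
  rw [Submodule.dense_iff_topologicalClosure_eq_top, Submodule.topologicalClosure_eq_top_iff]
  exact hT.isSymmetric.orthogonal_sup_map_eq_bot_iff hTbij.injective L

/-- For a closed subspace `L` of a real Hilbert space and a bounded self-adjoint
bijective operator `T`, the subspace `L + T(L)` is dense iff `T(L^⊥) ∩ L^⊥ = {0}`. -/
theorem dense_sum_iff_map_orthogonal_inf_orthogonal_eq_bot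
    {H : Type*} [NormedAddCommGroup H] [InnerProductSpace ℝ H] [CompleteSpace H]
    (L : Submodule ℝ H) (hL : IsClosed (L : Set H))
    (T : H →L[ℝ] H) (hT : IsSelfAdjoint T) (hTbij : Function.Bijective T) :
    Dense ((↑(L ⊔ L.map (T : H →ₗ[ℝ] H)) : Set H)) ↔
      Lᗮ.map (T : H →ₗ[ℝ] H) ⊓ Lᗮ = ⊥ :=
  dense_sum_iff_map_orthogonal_inf_orthogonal_eq_bot_general L T hT hTbij
end

section
/- Let H be a nontrivial finite-dimensional complex inner product space of complex dimension n, and let L ⊆ H be a real-linear subspace that is standard (L ∩ iL = {0} and L + iL = H) and factorial (L ∩ L' = {0}, where L' is the symplectic complement of L). Then dim_ℝ L = dim_ℝ L' = n and L + L' = H; in particular H is the direct sum of the real subspaces L and L'. -/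
/-!
Multiplication by `I` is a real-linear automorphism of `H`, so `L ⊕ iL = H` forces
`2 dim_ℝ L = dim_ℝ H = 2n`. For the real inner product `Re ⟪·, ·⟫` one has
`Re ⟪I f, g⟫ = Im ⟪f, g⟫`, so `L'` is the orthogonal complement of `iL` and has real dimension
`2n - n = n`. Since `L ∩ L' = {0}` and the dimensions of `L` and `L'` add up to `dim_ℝ H`,
`L + L' = H`.
-/

open Module
open scoped Pointwise InnerProductSpace

section ComplexVectorSpace

variable {V : Type*} [AddCommGroup V] [Module ℂ V]

theorem Submodule.finrank_smul_of_ne_zero {a : ℂ} (ha : a ≠ 0) (L : Submodule ℝ V) :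
    finrank ℝ ↥(a • L) = finrank ℝ L :=
  (Submodule.equivMapOfInjective (DistribSMul.toLinearMap ℝ V a)
    (smul_right_injective V ha) L).finrank_eq.symm

theorem Submodule.finrank_eq_finrank_complex_of_isCompl_I_smul [FiniteDimensional ℂ V]
    {L : Submodule ℝ V} (h : IsCompl L (Complex.I • L)) :
    finrank ℝ L = finrank ℂ V := by
  have := Submodule.finrank_sup_add_finrank_inf_eq L (Complex.I • L)
  rw [h.sup_eq_top, h.inf_eq_bot, finrank_top, finrank_bot,
    L.finrank_smul_of_ne_zero Complex.I_ne_zero, finrank_real_of_complex] at this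
  omega

end ComplexVectorSpace

theorem finrank_add_finrank_of_mem_iff_im_inner_eq_zero
    {H : Type*} [NormedAddCommGroup H] [InnerProductSpace ℂ H] [FiniteDimensional ℂ H]
    {L L' : Submodule ℝ H} (hL' : ∀ g : H, g ∈ L' ↔ ∀ f ∈ L, (⟪f, g⟫_ℂ).im = 0) :
    finrank ℝ L + finrank ℝ L' = finrank ℝ H := by
  let _ : InnerProductSpace ℝ H := .complexToReal
  have hL'_eq : L' = (Complex.I • L)ᗮ := by
    ext g
    have inner_I_smul : ∀ f, ⟪Complex.I • f, g⟫_ℝ = (⟪f, g⟫_ℂ).im := fun f ↦ by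
      simp [real_inner_eq_re_inner ℂ, inner_smul_left]
    simp only [hL', Submodule.mem_orthogonal, Submodule.mem_smul_pointwise_iff_exists,
      forall_exists_index, and_imp, forall_apply_eq_imp_iff₂, inner_I_smul]
  rw [hL'_eq, ← L.finrank_smul_of_ne_zero Complex.I_ne_zero]
  exact Submodule.finrank_add_finrank_orthogonal _

theorem standard_factorial_subspace_finrank_and_compl_general
    {H : Type*} [NormedAddCommGroup H] [InnerProductSpace ℂ H]
    [FiniteDimensional ℂ H] (n : ℕ) (hn : Module.finrank ℂ H = n)
    (L L' : Submodule ℝ H)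
    -- `L'` is the symplectic complement of `L`
    (hL' : ∀ g : H, g ∈ L' ↔ ∀ f ∈ L, (inner ℂ f g : ℂ).im = 0)
    -- `L` is standard: `L ∩ iL = {0}` and `L + iL = H`
    (hstd₁ : ∀ x ∈ L, ∀ y ∈ L, x = Complex.I • y → x = 0)
    (hstd₂ : ∀ z : H, ∃ f ∈ L, ∃ g ∈ L, z = f + Complex.I • g)
    -- `L` is factorial: `L ∩ L' = {0}`
    (hfac : L ⊓ L' = ⊥) :
    Module.finrank ℝ L = n ∧ Module.finrank ℝ L' = n ∧ L ⊔ L' = ⊤ ∧ IsCompl L L' := by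
  have hstd : IsCompl L (Complex.I • L) := by
    constructor
    · rw [Submodule.disjoint_def]
      rintro x hx ⟨y, hy, rfl⟩
      exact hstd₁ _ hx y hy rfl
    · rw [codisjoint_iff, Submodule.eq_top_iff']
      intro z
      obtain ⟨f, hf, g, hg, rfl⟩ := hstd₂ z
      exact Submodule.add_mem_sup hf (Submodule.smul_mem_pointwise_smul _ _ _ hg)
  have hLn : finrank ℝ L = n := hn ▸ Submodule.finrank_eq_finrank_complex_of_isCompl_I_smul hstd
  have hdim := finrank_add_finrank_of_mem_iff_im_inner_eq_zero hL'
  have hcompl : IsCompl L L' :=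
    (Submodule.isCompl_iff_disjoint L L' hdim.ge).mpr (disjoint_iff.mpr hfac)
  rw [finrank_real_of_complex, hn, hLn] at hdim
  have hL'n : finrank ℝ L' = n := by omega
  exact ⟨hLn, hL'n, hcompl.sup_eq_top, hcompl⟩

/-- A standard and factorial real subspace `L` of an `n`-dimensional complex inner
product space `H` satisfies `dim_ℝ L = dim_ℝ L' = n` and `L + L' = H`; together with
`L ∩ L' = {0}` this means `H` is the direct sum of `L` and its symplectic complement `L'`. -/
theorem standard_factorial_subspace_finrank_and_compl
    {H : Type*} [NormedAddCommGroup H] [InnerProductSpace ℂ H]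
    [FiniteDimensional ℂ H] [Nontrivial H] (n : ℕ) (hn : Module.finrank ℂ H = n)
    (L L' : Submodule ℝ H)
    -- `L'` is the symplectic complement of `L`
    (hL' : ∀ g : H, g ∈ L' ↔ ∀ f ∈ L, (inner ℂ f g : ℂ).im = 0)
    -- `L` is standard: `L ∩ iL = {0}` and `L + iL = H`
    (hstd₁ : ∀ x ∈ L, ∀ y ∈ L, x = Complex.I • y → x = 0)
    (hstd₂ : ∀ z : H, ∃ f ∈ L, ∃ g ∈ L, z = f + Complex.I • g)
    -- `L` is factorial: `L ∩ L' = {0}`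
    (hfac : L ⊓ L' = ⊥) :
    Module.finrank ℝ L = n ∧ Module.finrank ℝ L' = n ∧ L ⊔ L' = ⊤ ∧ IsCompl L L' :=
  standard_factorial_subspace_finrank_and_compl_general n hn L L' hL' hstd₁ hstd₂ hfac
end

section
/- Let H be a finite-dimensional complex inner product space and L ⊆ H a real-linear subspace that is standard and factorial. Let P be the ℝ-linear projection on H with range L and kernel L', and define Q : H → H by Qx := Px − i·P(i·x) − x. Then Q is complex-linear (Q(i·x) = i·Q(x) for all x) and self-adjoint with respect to the complex inner product of H: ⟨Qx, y⟩ = ⟨x, Qy⟩ for all x, y ∈ H. -/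
/-!
Write `ω = Im ⟨·, ·⟩`. Since the range `L` and the kernel `L'` of the idempotent `P` are
`ω`-orthogonal, `P` is `ω`-symmetric, and hence so is the complex-linear map `P - i P i`.
A complex-linear `ω`-symmetric map is symmetric for the inner product itself, because
`Re ⟨u, v⟩ = ω(u, i v)`; so `Q = (P - i P i) - 1` is complex-linear and self-adjoint.
-/

open Complex

section Module

variable {E : Type*} [AddCommGroup E] [Module ℂ E]

theorem Complex.smul_eq_re_smul_add_im_smul_I_smul (c : ℂ) (x : E) :
    c • x = c.re • x + c.im • I • x := by
  rw [← coe_smul, ← coe_smul, smul_smul, ← add_smul, re_add_im]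

noncomputable def LinearMap.ofCommuteI (T : E →ₗ[ℝ] E) (hT : ∀ x, T (I • x) = I • T x) :
    E →ₗ[ℂ] E where
  toFun := T
  map_add' := T.map_add
  map_smul' c x := by
    simp only [smul_eq_re_smul_add_im_smul_I_smul c, map_add, map_smul, hT, RingHom.id_apply]

noncomputable def LinearMap.twiceComplexLinearPart (P : E →ₗ[ℝ] E) : E →ₗ[ℂ] E :=
  let J : E →ₗ[ℝ] E := DistribSMul.toLinearMap ℝ E I
  LinearMap.ofCommuteI (P - J ∘ₗ P ∘ₗ J) fun x => by
    simp only [J, LinearMap.sub_apply, LinearMap.comp_apply, DistribSMul.toLinearMap_apply,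
      smul_smul, I_mul_I, neg_one_smul, map_neg, smul_sub]
    abel

theorem LinearMap.twiceComplexLinearPart_apply (P : E →ₗ[ℝ] E) (x : E) :
    P.twiceComplexLinearPart x = P x - I • P (I • x) :=
  rfl

end Module

section InnerProductSpace

variable {E : Type*} [NormedAddCommGroup E] [InnerProductSpace ℂ E]

theorem im_inner_I_smul_right (u v : E) : (inner ℂ u (I • v)).im = (inner ℂ u v).re := by
  rw [inner_smul_right, I_mul_im]

theorem im_inner_I_smul_left (u v : E) : (inner ℂ (I • u) v).im = -(inner ℂ u v).re := by
  rw [inner_smul_left, conj_I, neg_mul, neg_im, I_mul_im]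

theorem LinearMap.isSymmetric_of_im_inner (T : E →ₗ[ℂ] E)
    (hT : ∀ x y, (inner ℂ (T x) y).im = (inner ℂ x (T y)).im) : T.IsSymmetric := by
  intro x y
  apply Complex.ext
  · rw [← im_inner_I_smul_right, hT, map_smul, im_inner_I_smul_right]
  · exact hT x y

theorem im_inner_apply_eq_of_idempotent (P : E →ₗ[ℝ] E) (hP : ∀ x, P (P x) = P x)
    (hω : ∀ x, ∀ y ∈ LinearMap.ker P, (inner ℂ (P x) y).im = 0) (x y : E) :
    (inner ℂ (P x) y).im = (inner ℂ x (P y)).im := by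
  have hker : ∀ z, z - P z ∈ LinearMap.ker P := fun z => by
    rw [LinearMap.mem_ker, map_sub, hP, sub_self]
  have hx : (inner ℂ (P x) (y - P y)).im = 0 := hω x _ (hker y)
  have hy : (inner ℂ (x - P x) (P y)).im = 0 := by
    rw [← inner_conj_symm, conj_im, hω y _ (hker x), neg_zero]
  rw [inner_sub_right, sub_im, sub_eq_zero] at hx
  rw [inner_sub_left, sub_im, sub_eq_zero] at hy
  rw [hx, hy]

theorem LinearMap.isSymmetric_twiceComplexLinearPart (P : E →ₗ[ℝ] E)
    (hP : ∀ x y, (inner ℂ (P x) y).im = (inner ℂ x (P y)).im) :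
    P.twiceComplexLinearPart.IsSymmetric := by
  refine isSymmetric_of_im_inner _ fun x y => ?_
  have hre : (inner ℂ (P (I • x)) y).re = -(inner ℂ x (P (I • y))).re := by
    rw [← im_inner_I_smul_right, hP, im_inner_I_smul_left]
  simp only [twiceComplexLinearPart_apply, inner_sub_left, inner_sub_right, sub_im,
    im_inner_I_smul_left, im_inner_I_smul_right, hP x y, hre]
  ring

end InnerProductSpace

theorem cutting_projection_Q_complexLinear_selfAdjoint_general
    {H : Type*} [NormedAddCommGroup H] [InnerProductSpace ℂ H]
    (L L' : Submodule ℝ H)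
    -- `L'` is the symplectic complement of `L`
    (hL' : ∀ g : H, g ∈ L' ↔ ∀ f ∈ L, (inner ℂ f g : ℂ).im = 0)
    -- `P` is the real-linear projection with range `L` and kernel `L'`
    (P : H →ₗ[ℝ] H) (hPrange : LinearMap.range P = L) (hPker : LinearMap.ker P = L')
    (hPidem : ∀ x, P (P x) = P x)
    -- `Q x = P x - i P (i x) - x`
    (Q : H → H) (hQ : ∀ x, Q x = P x - Complex.I • P (Complex.I • x) - x) :
    (∀ x : H, Q (Complex.I • x) = Complex.I • Q x) ∧
      (∀ x y : H, (inner ℂ (Q x) y : ℂ) = inner ℂ x (Q y)) := by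
  have hPsymm : ∀ x y, (inner ℂ (P x) y).im = (inner ℂ x (P y)).im :=
    im_inner_apply_eq_of_idempotent P hPidem fun x y hy =>
      (hL' y).1 (hPker ▸ hy) (P x) (hPrange ▸ LinearMap.mem_range_self P x)
  have hQP : Q = ⇑(P.twiceComplexLinearPart - LinearMap.id : H →ₗ[ℂ] H) := funext hQ
  subst hQP
  exact ⟨map_smul _ I, (P.isSymmetric_twiceComplexLinearPart hPsymm).sub .id⟩

/-- For a standard factorial real subspace `L` of a finite-dimensional complex inner
product space, with `P` the real-linear projection onto `L` along `L'`, the operator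
`Q = P - i P i - 1` is complex-linear and self-adjoint for the complex inner product. -/
theorem cutting_projection_Q_complexLinear_selfAdjoint
    {H : Type*} [NormedAddCommGroup H] [InnerProductSpace ℂ H] [FiniteDimensional ℂ H]
    (L L' : Submodule ℝ H)
    -- `L'` is the symplectic complement of `L`
    (hL' : ∀ g : H, g ∈ L' ↔ ∀ f ∈ L, (inner ℂ f g : ℂ).im = 0)
    -- `L` is standard: `L ∩ iL = {0}` and `L + iL = H`
    (hstd₁ : ∀ x ∈ L, ∀ y ∈ L, x = Complex.I • y → x = 0)
    (hstd₂ : ∀ z : H, ∃ f ∈ L, ∃ g ∈ L, z = f + Complex.I • g)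
    -- `L` is factorial: `L ∩ L' = {0}`
    (hfac : L ⊓ L' = ⊥)
    -- `P` is the real-linear projection with range `L` and kernel `L'`
    (P : H →ₗ[ℝ] H) (hPrange : LinearMap.range P = L) (hPker : LinearMap.ker P = L')
    (hPidem : ∀ x, P (P x) = P x)
    -- `Q x = P x - i P (i x) - x`
    (Q : H → H) (hQ : ∀ x, Q x = P x - Complex.I • P (Complex.I • x) - x) :
    (∀ x : H, Q (Complex.I • x) = Complex.I • Q x) ∧
      (∀ x y : H, (inner ℂ (Q x) y : ℂ) = inner ℂ x (Q y)) :=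
  cutting_projection_Q_complexLinear_selfAdjoint_general L L' hL' P hPrange hPker hPidem Q hQ
end

section
/- Let H be a finite-dimensional complex inner product space and L ⊆ H a real-linear subspace that is standard and factorial. Let P be the ℝ-linear projection on H with range L and kernel L', and define Q : H → H by Qx := Px − i·P(i·x) − x. Then ⟨x, Q²x⟩ > ⟨x, x⟩ for every nonzero x ∈ H; equivalently, every eigenvalue λ of the self-adjoint operator Q satisfies |λ| > 1, i.e. the spectrum of Q is contained in (−∞,−1) ∪ (1,∞). -/
/-!
Write `T := P + iPi` (twice the complex-antilinear part of `P`), so that `Q = P - iPi - 1`.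
Idempotence of `P` gives `Q² = 1 - T²`. Since `P` maps into `L` and kills `L'`, it is
self-adjoint for the symplectic form `Im ⟨·, ·⟩`, which makes `T` skew-adjoint for the real
form `Re ⟨·, ·⟩`; hence `Re ⟨x, Q²x⟩ = ‖x‖² + ‖Tx‖²`. Finally `T` is injective: `Tx = 0`
forces `Px = P(ix) = 0` because `L ∩ iL = 0`, so `x` is orthogonal to `L` and hence to
`L + iL = H`.
-/

open Complex
open scoped InnerProductSpace

namespace CuttingProjection

variable {H : Type*} [NormedAddCommGroup H] [InnerProductSpace ℂ H]

noncomputable def antilinearPart (P : H →ₗ[ℝ] H) (x : H) : H := P x + I • P (I • x)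

noncomputable def cuttingOp (P : H →ₗ[ℝ] H) (x : H) : H := P x - I • P (I • x) - x

theorem re_inner_self (x : H) : (⟪x, x⟫_ℂ).re = ‖x‖ ^ 2 :=
  inner_self_eq_norm_sq (𝕜 := ℂ) x

theorem cuttingOp_cuttingOp {P : H →ₗ[ℝ] H} (hP : ∀ x, P (P x) = P x) (x : H) :
    cuttingOp P (cuttingOp P x) = x - antilinearPart P (antilinearPart P x) := by
  simp only [cuttingOp, antilinearPart, map_sub, map_add, smul_sub, smul_add, smul_smul,
    I_mul_I, neg_one_smul, map_neg, hP]
  module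

theorem cuttingOp_ofReal_smul (P : H →ₗ[ℝ] H) (r : ℝ) (x : H) :
    cuttingOp P ((r : ℂ) • x) = (r : ℂ) • cuttingOp P x := by
  simp only [cuttingOp, Complex.coe_smul, smul_comm I r x, map_smul, smul_comm I r, smul_sub]

theorem im_inner_map_left_eq {L : Submodule ℝ H} {P : H →ₗ[ℝ] H} (hP : ∀ x, P (P x) = P x)
    (hPL : ∀ x, P x ∈ L) (hker : ∀ g, P g = 0 → ∀ f ∈ L, (⟪f, g⟫_ℂ).im = 0) (x y : H) :
    (⟪P x, y⟫_ℂ).im = (⟪x, P y⟫_ℂ).im := by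
  have hy : (⟪P x, y - P y⟫_ℂ).im = 0 := hker _ (by simp [hP]) _ (hPL x)
  have hx : (⟪x - P x, P y⟫_ℂ).im = 0 := by
    rw [← inner_conj_symm, conj_im, hker _ (by simp [hP]) _ (hPL y), neg_zero]
  rw [inner_sub_right, sub_im, sub_eq_zero] at hy
  rw [inner_sub_left, sub_im, sub_eq_zero] at hx
  rw [hy, hx]

theorem re_inner_antilinearPart_left {P : H →ₗ[ℝ] H}
    (hsymm : ∀ x y, (⟪P x, y⟫_ℂ).im = (⟪x, P y⟫_ℂ).im) (x y : H) :
    (⟪antilinearPart P x, y⟫_ℂ).re = -(⟪x, antilinearPart P y⟫_ℂ).re := by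
  have hleft : (⟪P (I • x), y⟫_ℂ).im = -(⟪x, P y⟫_ℂ).re := by
    rw [hsymm, inner_smul_left]
    simp
  have hright : (⟪x, P (I • y)⟫_ℂ).im = (⟪P x, y⟫_ℂ).re := by
    rw [← hsymm, inner_smul_right]
    simp
  simp only [antilinearPart, inner_add_left, inner_add_right, inner_smul_left, inner_smul_right,
    add_re, conj_I, neg_mul, neg_re, mul_re, I_re, I_im, hleft, hright]
  ring

theorem re_inner_cuttingOp_cuttingOp {P : H →ₗ[ℝ] H} (hP : ∀ x, P (P x) = P x)
    (hsymm : ∀ x y, (⟪P x, y⟫_ℂ).im = (⟪x, P y⟫_ℂ).im) (x : H) :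
    (⟪x, cuttingOp P (cuttingOp P x)⟫_ℂ).re = ‖x‖ ^ 2 + ‖antilinearPart P x‖ ^ 2 := by
  have hskew := re_inner_antilinearPart_left hsymm x (antilinearPart P x)
  rw [re_inner_self] at hskew
  rw [cuttingOp_cuttingOp hP, inner_sub_right, sub_re, re_inner_self]
  linarith

theorem map_eq_zero_of_antilinearPart_eq_zero {L : Submodule ℝ H} {P : H →ₗ[ℝ] H}
    (hPL : ∀ x, P x ∈ L) (hinter : ∀ x ∈ L, ∀ y ∈ L, x = I • y → x = 0) {x : H}
    (hx : antilinearPart P x = 0) : P x = 0 ∧ P (I • x) = 0 := by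
  have hPx : P x = I • -P (I • x) := by
    rw [smul_neg, eq_neg_iff_add_eq_zero]
    exact hx
  have hPx0 : P x = 0 := hinter _ (hPL x) _ (neg_mem (hPL _)) hPx
  refine ⟨hPx0, ?_⟩
  rw [antilinearPart, hPx0, zero_add] at hx
  exact (smul_eq_zero.1 hx).resolve_left I_ne_zero

theorem inner_eq_zero_of_map_eq_zero {L : Submodule ℝ H} {P : H →ₗ[ℝ] H}
    (hker : ∀ g, P g = 0 → ∀ f ∈ L, (⟪f, g⟫_ℂ).im = 0) {x : H} (hx : P x = 0)
    (hIx : P (I • x) = 0) {f : H} (hf : f ∈ L) : ⟪f, x⟫_ℂ = 0 := by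
  have hre := hker _ hIx f hf
  rw [inner_smul_right, mul_im, I_re, I_im] at hre
  exact Complex.ext (by simpa using hre) (hker x hx f hf)

theorem eq_zero_of_forall_mem_inner_eq_zero {L : Submodule ℝ H}
    (hspan : ∀ z : H, ∃ f ∈ L, ∃ g ∈ L, z = f + I • g) {x : H}
    (hx : ∀ f ∈ L, ⟪f, x⟫_ℂ = 0) : x = 0 := by
  obtain ⟨f, hf, g, hg, rfl⟩ := hspan x
  rw [← inner_self_eq_zero (𝕜 := ℂ)]
  conv_lhs => rw [inner_add_left, inner_smul_left, hx f hf, hx g hg, mul_zero, add_zero]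

theorem eq_zero_of_antilinearPart_eq_zero {L : Submodule ℝ H} {P : H →ₗ[ℝ] H}
    (hPL : ∀ x, P x ∈ L) (hker : ∀ g, P g = 0 → ∀ f ∈ L, (⟪f, g⟫_ℂ).im = 0)
    (hinter : ∀ x ∈ L, ∀ y ∈ L, x = I • y → x = 0)
    (hspan : ∀ z : H, ∃ f ∈ L, ∃ g ∈ L, z = f + I • g) {x : H}
    (hx : antilinearPart P x = 0) : x = 0 :=
  have ⟨hPx, hPIx⟩ := map_eq_zero_of_antilinearPart_eq_zero hPL hinter hx
  eq_zero_of_forall_mem_inner_eq_zero hspan fun _ hf ↦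
    inner_eq_zero_of_map_eq_zero hker hPx hPIx hf

theorem norm_sq_lt_re_inner_cuttingOp_cuttingOp {L : Submodule ℝ H} {P : H →ₗ[ℝ] H}
    (hP : ∀ x, P (P x) = P x) (hPL : ∀ x, P x ∈ L)
    (hker : ∀ g, P g = 0 → ∀ f ∈ L, (⟪f, g⟫_ℂ).im = 0)
    (hinter : ∀ x ∈ L, ∀ y ∈ L, x = I • y → x = 0)
    (hspan : ∀ z : H, ∃ f ∈ L, ∃ g ∈ L, z = f + I • g) {x : H} (hx : x ≠ 0) :
    ‖x‖ ^ 2 < (⟪x, cuttingOp P (cuttingOp P x)⟫_ℂ).re := by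
  rw [re_inner_cuttingOp_cuttingOp hP (im_inner_map_left_eq hP hPL hker)]
  have hT : antilinearPart P x ≠ 0 := fun h ↦
    hx (eq_zero_of_antilinearPart_eq_zero hPL hker hinter hspan h)
  exact lt_add_of_pos_right _ (by positivity)

end CuttingProjection

open CuttingProjection in
theorem cutting_projection_Q_spectrum_outside_unit_interval_general
    {H : Type*} [NormedAddCommGroup H] [InnerProductSpace ℂ H]
    (L L' : Submodule ℝ H)
    -- `L'` is the symplectic complement of `L`
    (hL' : ∀ g : H, g ∈ L' ↔ ∀ f ∈ L, (inner ℂ f g : ℂ).im = 0)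
    -- `L` is standard: `L ∩ iL = {0}` and `L + iL = H`
    (hstd₁ : ∀ x ∈ L, ∀ y ∈ L, x = Complex.I • y → x = 0)
    (hstd₂ : ∀ z : H, ∃ f ∈ L, ∃ g ∈ L, z = f + Complex.I • g)
    -- `P` is the real-linear projection with range `L` and kernel `L'`
    (P : H →ₗ[ℝ] H) (hPrange : LinearMap.range P = L) (hPker : LinearMap.ker P = L')
    (hPidem : ∀ x, P (P x) = P x)
    -- `Q x = P x - i P (i x) - x`
    (Q : H → H) (hQ : ∀ x, Q x = P x - Complex.I • P (Complex.I • x) - x) :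
    (∀ x : H, x ≠ 0 → (inner ℂ x x : ℂ).re < (inner ℂ x (Q (Q x)) : ℂ).re) ∧
      (∀ (l : ℝ) (x : H), x ≠ 0 → Q x = (l : ℂ) • x → 1 < |l|) := by
  obtain rfl : Q = cuttingOp P := funext hQ
  have hPL (x : H) : P x ∈ L := hPrange ▸ LinearMap.mem_range_self P x
  have hker (g : H) (hg : P g = 0) : ∀ f ∈ L, (⟪f, g⟫_ℂ).im = 0 :=
    (hL' g).1 (hPker ▸ LinearMap.mem_ker.2 hg)
  have hlt {x : H} (hx : x ≠ 0) :=
    norm_sq_lt_re_inner_cuttingOp_cuttingOp hPidem hPL hker hstd₁ hstd₂ hx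
  refine ⟨fun x hx ↦ re_inner_self x ▸ hlt hx, fun l x hx hQx ↦ ?_⟩
  have hsq : ‖x‖ ^ 2 < l ^ 2 * ‖x‖ ^ 2 := by
    have := hlt hx
    rwa [hQx, cuttingOp_ofReal_smul, hQx, smul_smul, inner_smul_right, ← ofReal_mul,
      re_ofReal_mul, re_inner_self, ← sq] at this
  have hx2 : 0 < ‖x‖ ^ 2 := by positivity
  exact one_lt_sq_iff_one_lt_abs l |>.1 (by nlinarith)

/-- For a standard factorial real subspace `L` of a finite-dimensional complex inner
product space, with `P` the real-linear projection onto `L` along `L'`, the operator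
`Q = P - i P i - 1` satisfies `⟨x, Q²x⟩ > ⟨x, x⟩` for all `x ≠ 0`; equivalently every
eigenvalue `λ` of `Q` satisfies `|λ| > 1`. -/
theorem cutting_projection_Q_spectrum_outside_unit_interval
    {H : Type*} [NormedAddCommGroup H] [InnerProductSpace ℂ H] [FiniteDimensional ℂ H]
    (L L' : Submodule ℝ H)
    -- `L'` is the symplectic complement of `L`
    (hL' : ∀ g : H, g ∈ L' ↔ ∀ f ∈ L, (inner ℂ f g : ℂ).im = 0)
    -- `L` is standard: `L ∩ iL = {0}` and `L + iL = H`
    (hstd₁ : ∀ x ∈ L, ∀ y ∈ L, x = Complex.I • y → x = 0)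
    (hstd₂ : ∀ z : H, ∃ f ∈ L, ∃ g ∈ L, z = f + Complex.I • g)
    -- `L` is factorial: `L ∩ L' = {0}`
    (hfac : L ⊓ L' = ⊥)
    -- `P` is the real-linear projection with range `L` and kernel `L'`
    (P : H →ₗ[ℝ] H) (hPrange : LinearMap.range P = L) (hPker : LinearMap.ker P = L')
    (hPidem : ∀ x, P (P x) = P x)
    -- `Q x = P x - i P (i x) - x`
    (Q : H → H) (hQ : ∀ x, Q x = P x - Complex.I • P (Complex.I • x) - x) :
    (∀ x : H, x ≠ 0 → (inner ℂ x x : ℂ).re < (inner ℂ x (Q (Q x)) : ℂ).re) ∧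
      (∀ (l : ℝ) (x : H), x ≠ 0 → Q x = (l : ℂ) • x → 1 < |l|) :=
  cutting_projection_Q_spectrum_outside_unit_interval_general L L' hL' hstd₁ hstd₂ P hPrange hPker
    hPidem Q hQ
end

section
/- Let H be a finite-dimensional complex inner product space and L ⊆ H a real-linear subspace that is standard and factorial. Let T : H → H be the Tomita operator of L and Δ := T† ∘ T the one-particle modular operator, and let P be the ℝ-linear projection on H with range L and kernel L'. Then Δ is complex-linear, self-adjoint and positive-definite, the operator 1 − Δ is bijective, and P − i·P(i·) − 1 = (1 + Δ) ∘ (1 − Δ)⁻¹, i.e. the operator Q defined by Qx := Px − i·P(i·x) − x equals (1+Δ)(1−Δ)⁻¹. -/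
/-!
The Tomita operator `T` is an antilinear involution fixing `L`, and so is its real adjoint `T†`,
whose fixed vectors are symplectically orthogonal to `L`, i.e. lie in `L'`. Hence `Δ = T† T`
commutes with `i`, is symmetric, and `Re⟪x, Δ x⟫ = ‖T x‖²`. Splitting
`x - Δ x = (x + T x) - (T x + T† T x)` into a `T`-fixed and a `T†`-fixed vector gives
`P (x - Δ x) = x + T x`; applying this to `x` and `i x` yields `Q (x - Δ x) = x + Δ x`.
If `Δ x = x`, then `x + T x` and `i x + T (i x)` lie in `L ∩ L' = 0`, so `T x = -x = x`;
thus `1 - Δ` is injective, hence bijective in finite dimension.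
-/

open Complex (I)
open scoped InnerProductSpace

lemma LinearMap.bijective_id_sub {K V : Type*} [Field K] [AddCommGroup V] [Module K V]
    [FiniteDimensional K V] (A : V →ₗ[K] V) (hA : ∀ x, A x = x → x = 0) :
    Function.Bijective (fun x : V => x - A x) := by
  have hinj : Function.Injective (LinearMap.id - A : V →ₗ[K] V) := by
    rw [← LinearMap.ker_eq_bot, LinearMap.ker_eq_bot']
    exact fun x hx => hA x (sub_eq_zero.mp hx).symm
  exact ⟨hinj, LinearMap.injective_iff_surjective.mp hinj⟩

lemma LinearMap.apply_add_of_range_of_ker {R M : Type*} [Semiring R] [AddCommMonoid M]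
    [Module R M] {P : M →ₗ[R] M} (hP : ∀ x, P (P x) = P x) {l g : M} (hl : l ∈ LinearMap.range P)
    (hg : g ∈ LinearMap.ker P) : P (l + g) = l := by
  obtain ⟨y, rfl⟩ := hl
  rw [map_add, hP, LinearMap.mem_ker.mp hg, add_zero]

section TomitaModular

variable {H : Type*} [NormedAddCommGroup H] [InnerProductSpace ℂ H] {L L' : Submodule ℝ H}
  {T Tadj Δ : H →ₗ[ℝ] H}

lemma re_inner_comm (x y : H) : (⟪x, y⟫_ℂ).re = (⟪y, x⟫_ℂ).re :=
  inner_re_symm (𝕜 := ℂ) x y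

lemma re_inner_self (x : H) : (⟪x, x⟫_ℂ).re = ‖x‖ ^ 2 :=
  inner_self_eq_norm_sq (𝕜 := ℂ) x

lemma re_inner_I_smul_left (x y : H) : (⟪I • x, y⟫_ℂ).re = (⟪x, y⟫_ℂ).im := by
  simp

lemma re_inner_I_smul_right (x y : H) : (⟪x, I • y⟫_ℂ).re = -(⟪x, y⟫_ℂ).im := by
  simp

lemma ext_re_inner_left {x y : H} (h : ∀ z, (⟪x, z⟫_ℂ).re = (⟪y, z⟫_ℂ).re) : x = y := by
  rw [← sub_eq_zero, ← norm_eq_zero, ← sq_eq_zero_iff, ← re_inner_self]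
  simp only [inner_sub_left, Complex.sub_re, h, sub_self]

lemma inner_map_comm_of_re_inner {A : H →ₗ[ℝ] H} (hAI : ∀ x, A (I • x) = I • A x)
    (hA : ∀ x y, (⟪A x, y⟫_ℂ).re = (⟪x, A y⟫_ℂ).re) (x y : H) : ⟪A x, y⟫_ℂ = ⟪x, A y⟫_ℂ := by
  apply Complex.ext (hA x y)
  rw [← re_inner_I_smul_left, ← re_inner_I_smul_left, ← hAI, hA]

lemma tomita_apply_of_mem (hT : ∀ f ∈ L, ∀ g ∈ L, T (f + I • g) = f - I • g) {f : H}
    (hf : f ∈ L) : T f = f := by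
  simpa using hT f hf 0 L.zero_mem

lemma tomita_involutive (hL : ∀ z : H, ∃ f ∈ L, ∃ g ∈ L, z = f + I • g)
    (hT : ∀ f ∈ L, ∀ g ∈ L, T (f + I • g) = f - I • g) : Function.Involutive T := by
  intro z
  obtain ⟨f, hf, g, hg, rfl⟩ := hL z
  rw [hT f hf g hg, sub_eq_add_neg, ← smul_neg, hT f hf (-g) (L.neg_mem hg), smul_neg,
    sub_neg_eq_add]

lemma tomita_I_smul (hL : ∀ z : H, ∃ f ∈ L, ∃ g ∈ L, z = f + I • g)
    (hT : ∀ f ∈ L, ∀ g ∈ L, T (f + I • g) = f - I • g) (z : H) : T (I • z) = -(I • T z) := by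
  obtain ⟨f, hf, g, hg, rfl⟩ := hL z
  have hIz : I • (f + I • g) = -g + I • f := by
    rw [smul_add, smul_smul, Complex.I_mul_I, neg_one_smul, add_comm]
  rw [hIz, hT (-g) (L.neg_mem hg) f hf, hT f hf g hg, smul_sub, smul_smul, Complex.I_mul_I,
    neg_one_smul]
  abel

lemma mem_of_tomita_apply_eq_self (hL : ∀ z : H, ∃ f ∈ L, ∃ g ∈ L, z = f + I • g)
    (hT : ∀ f ∈ L, ∀ g ∈ L, T (f + I • g) = f - I • g) {z : H} (hz : T z = z) : z ∈ L := by
  obtain ⟨f, hf, g, hg, rfl⟩ := hL z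
  rw [hT f hf g hg, sub_eq_add_neg, add_right_inj, neg_eq_iff_add_eq_zero, ← two_smul ℝ,
    smul_eq_zero, smul_eq_zero] at hz
  obtain hz | hz | hz := hz
  · norm_num at hz
  · exact absurd hz Complex.I_ne_zero
  · simpa [hz] using hf

lemma involutive_of_re_inner_adjoint
    (hTadj : ∀ x y : H, (⟪Tadj x, y⟫_ℂ).re = (⟪x, T y⟫_ℂ).re) (hT : Function.Involutive T) :
    Function.Involutive Tadj := by
  intro z
  refine ext_re_inner_left fun y => ?_
  rw [hTadj, hTadj, hT]

lemma I_smul_of_re_inner_adjoint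
    (hTadj : ∀ x y : H, (⟪Tadj x, y⟫_ℂ).re = (⟪x, T y⟫_ℂ).re)
    (hTI : ∀ z, T (I • z) = -(I • T z)) (z : H) : Tadj (I • z) = -(I • Tadj z) := by
  refine ext_re_inner_left fun y => ?_
  calc (⟪Tadj (I • z), y⟫_ℂ).re = (⟪I • z, T y⟫_ℂ).re := hTadj _ _
    _ = (⟪z, T (I • y)⟫_ℂ).re := by
      rw [hTI, inner_neg_right, Complex.neg_re, re_inner_I_smul_left, re_inner_I_smul_right,
        neg_neg]
    _ = (⟪Tadj z, I • y⟫_ℂ).re := (hTadj _ _).symm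
    _ = (⟪-(I • Tadj z), y⟫_ℂ).re := by
      rw [re_inner_I_smul_right, inner_neg_left, Complex.neg_re, re_inner_I_smul_left]

lemma im_inner_eq_zero_of_re_inner_adjoint
    (hTadj : ∀ x y : H, (⟪Tadj x, y⟫_ℂ).re = (⟪x, T y⟫_ℂ).re)
    (hTI : ∀ z, T (I • z) = -(I • T z)) {f g : H} (hf : T f = f) (hg : Tadj g = g) :
    (⟪f, g⟫_ℂ).im = 0 := by
  have h : (⟪I • f, g⟫_ℂ).re = -(⟪I • f, g⟫_ℂ).re :=
    calc (⟪I • f, g⟫_ℂ).re = (⟪I • f, Tadj g⟫_ℂ).re := by rw [hg]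
      _ = (⟪g, T (I • f)⟫_ℂ).re := by rw [re_inner_comm, hTadj]
      _ = -(⟪I • f, g⟫_ℂ).re := by
        rw [hTI, hf, inner_neg_right, Complex.neg_re, re_inner_comm]
  rw [← re_inner_I_smul_left]
  linarith

lemma modular_I_smul (hΔ : ∀ x, Δ x = Tadj (T x)) (hTI : ∀ z, T (I • z) = -(I • T z))
    (hTadjI : ∀ z, Tadj (I • z) = -(I • Tadj z)) (x : H) : Δ (I • x) = I • Δ x := by
  rw [hΔ, hΔ, hTI, map_neg, hTadjI, neg_neg]

lemma re_inner_modular (hTadj : ∀ x y : H, (⟪Tadj x, y⟫_ℂ).re = (⟪x, T y⟫_ℂ).re)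
    (hΔ : ∀ x, Δ x = Tadj (T x)) (x y : H) : (⟪Δ x, y⟫_ℂ).re = (⟪T x, T y⟫_ℂ).re := by
  rw [hΔ, hTadj]

lemma inner_modular_comm (hTadj : ∀ x y : H, (⟪Tadj x, y⟫_ℂ).re = (⟪x, T y⟫_ℂ).re)
    (hΔ : ∀ x, Δ x = Tadj (T x)) (hΔI : ∀ x, Δ (I • x) = I • Δ x) (x y : H) :
    ⟪Δ x, y⟫_ℂ = ⟪x, Δ y⟫_ℂ := by
  refine inner_map_comm_of_re_inner hΔI (fun x y => ?_) x y
  rw [re_inner_modular hTadj hΔ, re_inner_comm, ← re_inner_modular hTadj hΔ, re_inner_comm]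

lemma re_inner_modular_self_pos (hTadj : ∀ x y : H, (⟪Tadj x, y⟫_ℂ).re = (⟪x, T y⟫_ℂ).re)
    (hΔ : ∀ x, Δ x = Tadj (T x)) (hT : Function.Injective T) {x : H} (hx : x ≠ 0) :
    0 < (⟪x, Δ x⟫_ℂ).re := by
  rw [re_inner_comm, re_inner_modular hTadj hΔ, re_inner_self]
  exact pow_pos (norm_pos_iff.mpr ((map_ne_zero_iff T hT).mpr hx)) 2

/-- `Δ x = x` forces `T x = T† x`, so `x + T x` is fixed by both `T` and `T†`. -/
lemma add_tomita_eq_zero_of_modular_apply_eq_self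
    (hfix : ∀ u, T u = u → Tadj u = u → u = 0) (hT : Function.Involutive T)
    (hTadj : Function.Involutive Tadj) (hΔ : ∀ x, Δ x = Tadj (T x)) {x : H} (hx : Δ x = x) :
    x + T x = 0 := by
  rw [hΔ] at hx
  have hTx : Tadj x = T x := (congrArg Tadj hx).symm.trans (hTadj _)
  refine hfix _ ?_ ?_
  · rw [map_add, hT, add_comm]
  · rw [map_add, hTx, hx, add_comm]

lemma eq_zero_of_modular_apply_eq_self
    (hfix : ∀ u, T u = u → Tadj u = u → u = 0) (hT : Function.Involutive T)
    (hTadj : Function.Involutive Tadj) (hΔ : ∀ x, Δ x = Tadj (T x))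
    (hTI : ∀ z, T (I • z) = -(I • T z)) (hΔI : ∀ x, Δ (I • x) = I • Δ x) {x : H}
    (hx : Δ x = x) : x = 0 := by
  have hsum := add_tomita_eq_zero_of_modular_apply_eq_self hfix hT hTadj hΔ hx
  have hdiff : x - T x = 0 := by
    have hI := add_tomita_eq_zero_of_modular_apply_eq_self hfix hT hTadj hΔ
      (x := I • x) (by rw [hΔI, hx])
    rwa [hTI, ← sub_eq_add_neg, ← smul_sub, smul_eq_zero, or_iff_right Complex.I_ne_zero] at hI
  have htwo : (2 : ℝ) • x = 0 :=
    calc (2 : ℝ) • x = (x + T x) + (x - T x) := by rw [two_smul]; abel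
      _ = 0 := by rw [hsum, hdiff, add_zero]
  simpa using htwo

lemma proj_sub_modular {P : H →ₗ[ℝ] H} (hPrange : LinearMap.range P = L)
    (hPker : LinearMap.ker P = L') (hP : ∀ x, P (P x) = P x)
    (hfixL : ∀ z, T z = z → z ∈ L) (hfixL' : ∀ g, Tadj g = g → g ∈ L')
    (hT : Function.Involutive T) (hTadj : Function.Involutive Tadj)
    (hΔ : ∀ x, Δ x = Tadj (T x)) (x : H) : P (x - Δ x) = x + T x := by
  have hsplit : x - Δ x = (x + T x) + -(T x + Tadj (T x)) := by rw [hΔ]; abel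
  rw [hsplit]
  refine LinearMap.apply_add_of_range_of_ker hP (hPrange ▸ hfixL _ ?_) (hPker ▸ hfixL' _ ?_)
  · rw [map_add, hT, add_comm]
  · rw [map_neg, map_add, hTadj, add_comm]

lemma cutting_sub_modular {P : H → H} (hPΔ : ∀ x, P (x - Δ x) = x + T x)
    (hTI : ∀ z, T (I • z) = -(I • T z)) (hΔI : ∀ x, Δ (I • x) = I • Δ x) (x : H) :
    P (x - Δ x) - I • P (I • (x - Δ x)) - (x - Δ x) = x + Δ x := by
  rw [smul_sub, ← hΔI, hPΔ, hPΔ, hTI, smul_add, smul_neg, smul_smul, smul_smul, Complex.I_mul_I,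
    neg_one_smul, neg_one_smul]
  abel

end TomitaModular

theorem cutting_projection_eq_modular_formula_general
    {H : Type*} [NormedAddCommGroup H] [InnerProductSpace ℂ H] [FiniteDimensional ℂ H]
    (L L' : Submodule ℝ H)
    -- `L'` is the symplectic complement of `L`
    (hL' : ∀ g : H, g ∈ L' ↔ ∀ f ∈ L, (inner ℂ f g : ℂ).im = 0)
    -- `L` is standard: `L ∩ iL = {0}` and `L + iL = H`
    (hstd₂ : ∀ z : H, ∃ f ∈ L, ∃ g ∈ L, z = f + Complex.I • g)
    -- `L` is factorial: `L ∩ L' = {0}`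
    (hfac : L ⊓ L' = ⊥)
    -- `T` is the Tomita operator of `L`: `T(f + i g) = f - i g` for `f, g ∈ L`
    (T : H →ₗ[ℝ] H) (hT : ∀ f ∈ L, ∀ g ∈ L, T (f + Complex.I • g) = f - Complex.I • g)
    -- `T†` is the adjoint of `T` with respect to the real inner product `Re⟨·,·⟩`
    (Tadj : H →ₗ[ℝ] H)
    (hTadj : ∀ x y : H, (inner ℂ (Tadj x) y : ℂ).re = (inner ℂ x (T y) : ℂ).re)
    -- the one-particle modular operator `Δ = T† ∘ T`
    (Δ : H →ₗ[ℝ] H) (hΔ : ∀ x, Δ x = Tadj (T x))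
    -- `P` is the real-linear projection with range `L` and kernel `L'`
    (P : H →ₗ[ℝ] H) (hPrange : LinearMap.range P = L) (hPker : LinearMap.ker P = L')
    (hPidem : ∀ x, P (P x) = P x)
    -- `Q x = P x - i P (i x) - x`
    (Q : H → H) (hQ : ∀ x, Q x = P x - Complex.I • P (Complex.I • x) - x) :
    (∀ x : H, Δ (Complex.I • x) = Complex.I • Δ x) ∧
      (∀ x y : H, (inner ℂ (Δ x) y : ℂ) = inner ℂ x (Δ y)) ∧
      (∀ x : H, x ≠ 0 → 0 < (inner ℂ x (Δ x) : ℂ).re) ∧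
      Function.Bijective (fun x : H => x - Δ x) ∧
      (∀ x : H, Q (x - Δ x) = x + Δ x) := by
  have hTinv := tomita_involutive hstd₂ hT
  have hTI := tomita_I_smul hstd₂ hT
  have hTadjinv := involutive_of_re_inner_adjoint hTadj hTinv
  have hΔI := modular_I_smul hΔ hTI (I_smul_of_re_inner_adjoint hTadj hTI)
  have hfixL : ∀ z, T z = z → z ∈ L := fun z => mem_of_tomita_apply_eq_self hstd₂ hT
  have hfixL' : ∀ g, Tadj g = g → g ∈ L' := fun g hg => (hL' g).mpr fun f hf =>
    im_inner_eq_zero_of_re_inner_adjoint hTadj hTI (tomita_apply_of_mem hT hf) hg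
  have hfix : ∀ u, T u = u → Tadj u = u → u = 0 := fun u hu hu' =>
    Submodule.disjoint_def.mp (disjoint_iff.mpr hfac) u (hfixL u hu) (hfixL' u hu')
  refine ⟨hΔI, inner_modular_comm hTadj hΔ hΔI,
    fun x => re_inner_modular_self_pos hTadj hΔ hTinv.injective,
    LinearMap.bijective_id_sub Δ fun x =>
      eq_zero_of_modular_apply_eq_self hfix hTinv hTadjinv hΔ hTI hΔI,
    fun x => ?_⟩
  rw [hQ]
  exact cutting_sub_modular (proj_sub_modular hPrange hPker hPidem hfixL hfixL' hTinv hTadjinv hΔ)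
    hTI hΔI x

/-- For a standard factorial real subspace `L` of a finite-dimensional complex inner
product space, with Tomita operator `T`, modular operator `Δ = T† T` (adjoint for the
real inner product `Re⟨·,·⟩`), and `P` the real-linear projection onto `L` along `L'`:
`Δ` is complex-linear, self-adjoint and positive-definite, `1 - Δ` is bijective, and
`Q = P - i P i - 1` equals `(1 + Δ)(1 - Δ)⁻¹`. -/
theorem cutting_projection_eq_modular_formula
    {H : Type*} [NormedAddCommGroup H] [InnerProductSpace ℂ H] [FiniteDimensional ℂ H]
    (L L' : Submodule ℝ H)
    -- `L'` is the symplectic complement of `L`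
    (hL' : ∀ g : H, g ∈ L' ↔ ∀ f ∈ L, (inner ℂ f g : ℂ).im = 0)
    -- `L` is standard: `L ∩ iL = {0}` and `L + iL = H`
    (hstd₁ : ∀ x ∈ L, ∀ y ∈ L, x = Complex.I • y → x = 0)
    (hstd₂ : ∀ z : H, ∃ f ∈ L, ∃ g ∈ L, z = f + Complex.I • g)
    -- `L` is factorial: `L ∩ L' = {0}`
    (hfac : L ⊓ L' = ⊥)
    -- `T` is the Tomita operator of `L`: `T(f + i g) = f - i g` for `f, g ∈ L`
    (T : H →ₗ[ℝ] H) (hT : ∀ f ∈ L, ∀ g ∈ L, T (f + Complex.I • g) = f - Complex.I • g)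
    -- `T†` is the adjoint of `T` with respect to the real inner product `Re⟨·,·⟩`
    (Tadj : H →ₗ[ℝ] H)
    (hTadj : ∀ x y : H, (inner ℂ (Tadj x) y : ℂ).re = (inner ℂ x (T y) : ℂ).re)
    -- the one-particle modular operator `Δ = T† ∘ T`
    (Δ : H →ₗ[ℝ] H) (hΔ : ∀ x, Δ x = Tadj (T x))
    -- `P` is the real-linear projection with range `L` and kernel `L'`
    (P : H →ₗ[ℝ] H) (hPrange : LinearMap.range P = L) (hPker : LinearMap.ker P = L')
    (hPidem : ∀ x, P (P x) = P x)
    -- `Q x = P x - i P (i x) - x`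
    (Q : H → H) (hQ : ∀ x, Q x = P x - Complex.I • P (Complex.I • x) - x) :
    (∀ x : H, Δ (Complex.I • x) = Complex.I • Δ x) ∧
      (∀ x y : H, (inner ℂ (Δ x) y : ℂ) = inner ℂ x (Δ y)) ∧
      (∀ x : H, x ≠ 0 → 0 < (inner ℂ x (Δ x) : ℂ).re) ∧
      Function.Bijective (fun x : H => x - Δ x) ∧
      (∀ x : H, Q (x - Δ x) = x + Δ x) :=
  cutting_projection_eq_modular_formula_general L L' hL' hstd₂ hfac T hT Tadj hTadj Δ hΔ P hPrange
    hPker hPidem Q hQ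
end

section
/- Let V be a nontrivial finite-dimensional real inner product space, S : V → V a symmetric positive-definite linear map, L ⊆ V a linear subspace, and χ : V → V the orthogonal projection onto L. Assume S²(L) ∩ L = {0} and S²(L^⊥) ∩ L^⊥ = {0}. Then the operator B := S∘χ∘S⁻¹ + S⁻¹∘χ∘S − 1 is symmetric (⟨Bu, v⟩ = ⟨u, Bv⟩ for all u, v), and ⟨v, B²v⟩ > ⟨v, v⟩ for every nonzero v ∈ V; equivalently, every eigenvalue λ of B satisfies |λ| > 1. -/
/-!
With `P := S χ S⁻¹` and `Q := S⁻¹ χ S`, `P` is idempotent and `Q` is its adjoint, so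
`B = P + Q - 1` is symmetric and `‖B v‖² = ‖v‖² + ‖P v - Q v‖²`. If `P v = Q v`, then
`S²(χ S⁻¹ v) = χ S v` lies in `S²(L) ∩ L = 0`; hence `S v` and `S⁻¹ v` both lie in `L^⊥`, and
`S²(S⁻¹ v) = S v` lies in `S²(L^⊥) ∩ L^⊥ = 0`, so `v = 0`. Thus `‖B v‖ > ‖v‖` for `v ≠ 0`, which
gives `⟨v, B² v⟩ = ‖B v‖² > ‖v‖²` and `|λ| > 1` for every eigenvalue `λ`.
-/

local notation "⟪" x ", " y "⟫" => @inner ℝ _ _ x y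

theorem Submodule.apply_eq_zero_of_map_inf_eq_bot {R M : Type*} [Ring R] [AddCommGroup M]
    [Module R M] {K : Submodule R M} {T : M →ₗ[R] M} (h : K.map T ⊓ K = ⊥) {x : M} (hx : x ∈ K)
    (hTx : T x ∈ K) : T x = 0 := by
  rw [← Submodule.mem_bot R, ← h]
  exact ⟨Submodule.mem_map_of_mem hx, hTx⟩

theorem IsIdempotentElem.conj_linearEquiv {R M : Type*} [CommSemiring R] [AddCommMonoid M]
    [Module R M] {p : M →ₗ[R] M} (hp : IsIdempotentElem p) (e : M ≃ₗ[R] M) :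
    IsIdempotentElem ((e : M →ₗ[R] M) ∘ₗ p ∘ₗ (e.symm : M →ₗ[R] M)) :=
  LinearMap.ext fun v => by
    simpa using congr(e ($hp.eq (e.symm v)))

theorem LinearMap.isSymmetricProjection_of_forall_mem_orthogonal {𝕜 E : Type*} [RCLike 𝕜]
    [NormedAddCommGroup E] [InnerProductSpace 𝕜 E] {K : Submodule 𝕜 E} {p : E →ₗ[𝕜] E}
    (hp : ∀ v, p v ∈ K ∧ v - p v ∈ Kᗮ) : p.IsSymmetricProjection :=
  have : K.HasOrthogonalProjection := ⟨fun v => ⟨p v, hp v⟩⟩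
  p.isSymmetricProjection_iff_eq_coe_starProjection.mpr ⟨K, this,
    LinearMap.ext fun v => (K.eq_starProjection_of_mem_orthogonal (hp v).1 (hp v).2).symm⟩

section

variable {V : Type*} [NormedAddCommGroup V] [InnerProductSpace ℝ V] {P Q : V →ₗ[ℝ] V}

theorem LinearMap.isSymmetric_add_sub_one (hPQ : ∀ u v, ⟪P u, v⟫ = ⟪u, Q v⟫) :
    (P + Q - 1).IsSymmetric := by
  intro u v
  have hQP : ⟪Q u, v⟫ = ⟪u, P v⟫ := by rw [real_inner_comm, ← hPQ, real_inner_comm]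
  simp only [LinearMap.sub_apply, LinearMap.add_apply, Module.End.one_apply, inner_sub_left,
    inner_add_left, inner_sub_right, inner_add_right, hPQ, hQP]
  ring

theorem LinearMap.norm_add_sub_one_apply_sq (hP : IsIdempotentElem P)
    (hPQ : ∀ u v, ⟪P u, v⟫ = ⟪u, Q v⟫) (v : V) :
    ‖(P + Q - 1) v‖ ^ 2 = ‖v‖ ^ 2 + ‖P v - Q v‖ ^ 2 := by
  have hPv : ⟪P v, v⟫ = ⟪P v, Q v⟫ := by rw [← hPQ, ← Module.End.mul_apply, hP.eq]
  have hQv : ⟪Q v, v⟫ = ⟪P v, v⟫ := by rw [real_inner_comm, hPQ]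
  simp only [← real_inner_self_eq_norm_sq, LinearMap.sub_apply, LinearMap.add_apply,
    Module.End.one_apply, inner_sub_left, inner_add_left, inner_sub_right, inner_add_right]
  linarith [real_inner_comm v (P v), real_inner_comm v (Q v), real_inner_comm (P v) (Q v)]

theorem LinearMap.norm_lt_norm_add_sub_one_apply (hP : IsIdempotentElem P)
    (hPQ : ∀ u v, ⟪P u, v⟫ = ⟪u, Q v⟫) (hPQ_ker : ∀ v, P v = Q v → v = 0) {v : V} (hv : v ≠ 0) :
    ‖v‖ < ‖(P + Q - 1) v‖ := by
  have hPQv : 0 < ‖P v - Q v‖ := norm_pos_iff.mpr (sub_ne_zero.mpr (mt (hPQ_ker v) hv))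
  refine lt_of_pow_lt_pow_left₀ 2 (norm_nonneg _) ?_
  rw [norm_add_sub_one_apply_sq hP hPQ]
  nlinarith

theorem LinearMap.IsSymmetric.inner_conj_apply {S : V ≃ₗ[ℝ] V} (hS : (S : V →ₗ[ℝ] V).IsSymmetric)
    {T : V →ₗ[ℝ] V} (hT : T.IsSymmetric) (u v : V) :
    ⟪S (T (S.symm u)), v⟫ = ⟪u, S.symm (T (S v))⟫ :=
  (hS _ _).trans <| (hT _ _).trans (hS.toLinearMap_symm _ _)

theorem eq_zero_of_conj_apply_eq_conj_symm_apply {S : V ≃ₗ[ℝ] V} {L : Submodule ℝ V}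
    {χ : V →ₗ[ℝ] V} (hχ : ∀ v : V, χ v ∈ L ∧ v - χ v ∈ Lᗮ)
    (hL : L.map ((S : V →ₗ[ℝ] V) ∘ₗ (S : V →ₗ[ℝ] V)) ⊓ L = ⊥)
    (hLperp : Lᗮ.map ((S : V →ₗ[ℝ] V) ∘ₗ (S : V →ₗ[ℝ] V)) ⊓ Lᗮ = ⊥) {v : V}
    (h : S (χ (S.symm v)) = S.symm (χ (S v))) : v = 0 := by
  have mem_orthogonal_of_apply_eq_zero : ∀ w, χ w = 0 → w ∈ Lᗮ := fun w hw => by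
    simpa [hw] using (hχ w).2
  have hSS : S (S (χ (S.symm v))) = χ (S v) := by rw [h, LinearEquiv.apply_symm_apply]
  have hχSv : χ (S v) = 0 := by
    simpa [hSS] using Submodule.apply_eq_zero_of_map_inf_eq_bot hL (hχ (S.symm v)).1
      (by simpa [hSS] using (hχ (S v)).1)
  have hχSsymmv : χ (S.symm v) = 0 := by simpa [hχSv] using hSS
  have hSv : S v = 0 := by
    simpa using Submodule.apply_eq_zero_of_map_inf_eq_bot hLperp
      (mem_orthogonal_of_apply_eq_zero _ hχSsymmv)
      (by simpa using mem_orthogonal_of_apply_eq_zero _ hχSv)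
  simpa using hSv

end

theorem discretized_B_symmetric_and_spectrum_outside_unit_interval_general
    {V : Type*} [NormedAddCommGroup V] [InnerProductSpace ℝ V]
    (S : V ≃ₗ[ℝ] V)
    -- `S` is symmetric and positive-definite
    (hSsym : ∀ u v : V, (inner ℝ (S u) v : ℝ) = inner ℝ u (S v))
    (L : Submodule ℝ V)
    -- `χ` is the orthogonal projection onto `L`
    (χ : V →ₗ[ℝ] V) (hχ : ∀ v : V, χ v ∈ L ∧ v - χ v ∈ Lᗮ)
    -- `S²(L) ∩ L = {0}` and `S²(L^⊥) ∩ L^⊥ = {0}`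
    (hL : L.map ((S : V →ₗ[ℝ] V) ∘ₗ (S : V →ₗ[ℝ] V)) ⊓ L = ⊥)
    (hLperp : Lᗮ.map ((S : V →ₗ[ℝ] V) ∘ₗ (S : V →ₗ[ℝ] V)) ⊓ Lᗮ = ⊥)
    -- `B = SχS⁻¹ + S⁻¹χS - 1`
    (B : V → V) (hB : ∀ v : V, B v = S (χ (S.symm v)) + S.symm (χ (S v)) - v) :
    (∀ u v : V, (inner ℝ (B u) v : ℝ) = inner ℝ u (B v)) ∧
      (∀ v : V, v ≠ 0 → (inner ℝ v v : ℝ) < inner ℝ v (B (B v))) ∧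
      (∀ (l : ℝ) (v : V), v ≠ 0 → B v = l • v → 1 < |l|) := by
  set P := (S : V →ₗ[ℝ] V) ∘ₗ χ ∘ₗ (S.symm : V →ₗ[ℝ] V)
  set Q := (S.symm : V →ₗ[ℝ] V) ∘ₗ χ ∘ₗ (S : V →ₗ[ℝ] V)
  have hχproj := LinearMap.isSymmetricProjection_of_forall_mem_orthogonal hχ
  have hPQ : ∀ u v, ⟪P u, v⟫ = ⟪u, Q v⟫ :=
    LinearMap.IsSymmetric.inner_conj_apply hSsym hχproj.isSymmetric
  have hnorm : ∀ v ≠ 0, ‖v‖ < ‖(P + Q - 1) v‖ := fun v =>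
    LinearMap.norm_lt_norm_add_sub_one_apply (hχproj.isIdempotentElem.conj_linearEquiv S) hPQ
      (fun _ => eq_zero_of_conj_apply_eq_conj_symm_apply hχ hL hLperp)
  obtain rfl : B = ⇑(P + Q - 1) := funext fun v => by simp [P, Q, hB]
  have hBsymm := LinearMap.isSymmetric_add_sub_one hPQ
  refine ⟨hBsymm, fun v hv => ?_, fun l v hv hlv => ?_⟩
  · rw [← hBsymm, real_inner_self_eq_norm_sq, real_inner_self_eq_norm_sq]
    exact pow_lt_pow_left₀ (hnorm v hv) (norm_nonneg v) two_ne_zero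
  · have := hnorm v hv
    rw [hlv, norm_smul, Real.norm_eq_abs] at this
    exact (lt_mul_iff_one_lt_left (norm_pos_iff.mpr hv)).mp this

/-- For a finite-dimensional one-particle structure `(V, L, S²)` with
`S²(L) ∩ L = {0}` and `S²(L^⊥) ∩ L^⊥ = {0}`, the operator
`B = SχS⁻¹ + S⁻¹χS - 1` is symmetric and satisfies `⟨v, B²v⟩ > ⟨v, v⟩` for `v ≠ 0`;
equivalently, every eigenvalue `λ` of `B` satisfies `|λ| > 1`. -/
theorem discretized_B_symmetric_and_spectrum_outside_unit_interval
    {V : Type*} [NormedAddCommGroup V] [InnerProductSpace ℝ V]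
    [FiniteDimensional ℝ V] [Nontrivial V]
    (S : V ≃ₗ[ℝ] V)
    -- `S` is symmetric and positive-definite
    (hSsym : ∀ u v : V, (inner ℝ (S u) v : ℝ) = inner ℝ u (S v))
    (hSpos : ∀ v : V, v ≠ 0 → 0 < (inner ℝ v (S v) : ℝ))
    (L : Submodule ℝ V)
    -- `χ` is the orthogonal projection onto `L`
    (χ : V →ₗ[ℝ] V) (hχ : ∀ v : V, χ v ∈ L ∧ v - χ v ∈ Lᗮ)
    -- `S²(L) ∩ L = {0}` and `S²(L^⊥) ∩ L^⊥ = {0}`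
    (hL : L.map ((S : V →ₗ[ℝ] V) ∘ₗ (S : V →ₗ[ℝ] V)) ⊓ L = ⊥)
    (hLperp : Lᗮ.map ((S : V →ₗ[ℝ] V) ∘ₗ (S : V →ₗ[ℝ] V)) ⊓ Lᗮ = ⊥)
    -- `B = SχS⁻¹ + S⁻¹χS - 1`
    (B : V → V) (hB : ∀ v : V, B v = S (χ (S.symm v)) + S.symm (χ (S v)) - v) :
    (∀ u v : V, (inner ℝ (B u) v : ℝ) = inner ℝ u (B v)) ∧
      (∀ v : V, v ≠ 0 → (inner ℝ v v : ℝ) < inner ℝ v (B (B v))) ∧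
      (∀ (l : ℝ) (v : V), v ≠ 0 → B v = l • v → 1 < |l|) :=
  discretized_B_symmetric_and_spectrum_outside_unit_interval_general S hSsym L χ hχ hL hLperp B hB
end

section
/- Let f : ℝ → ℝ be measurable and Lebesgue integrable on [0, b₂ − a₁], where a₁ < b₁ ≤ a₂ < b₂ are real numbers, and define F(x) := x·∫₀ˣ f(t) dt − ∫₀ˣ t·f(t) dt for x ∈ [0, b₂ − a₁]. Then the double integral of f(y − x) over the rectangle [a₁, b₁] × [a₂, b₂] satisfies ∫_{a₂}^{b₂} ∫_{a₁}^{b₁} f(y − x) dx dy = F(b₂ − a₁) − F(b₂ − b₁) − F(a₂ − a₁) + F(a₂ − b₁). -/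
/-!
The inner integral over `x` is a difference `G (y - a₁) - G (y - b₁)` of the primitive
`G u = ∫₀ᵘ f`, and integrating `G (y - c)` over `y` gives a difference of values of the second
primitive `H d = ∫₀ᵈ G`. Since `G` is absolutely continuous with `G' = f` almost everywhere,
integration by parts against `u ↦ u` yields `H x = x G x - ∫₀ˣ t f t dt = F x`.
-/

open MeasureTheory intervalIntegral Set

noncomputable def secondPrimitive (f : ℝ → ℝ) (x : ℝ) : ℝ :=
  ∫ u in 0..x, ∫ t in 0..u, f t

theorem integral_primitive_eq_mul_integral_sub {f : ℝ → ℝ} {a b : ℝ}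
    (hf : IntervalIntegrable f volume a b) :
    ∫ u in a..b, ∫ t in a..u, f t = b * (∫ t in a..b, f t) - ∫ t in a..b, t * f t := by
  have hG := hf.absolutelyContinuousOnInterval_intervalIntegral left_mem_uIcc
  have hid : AbsolutelyContinuousOnInterval id a b :=
    LipschitzWith.id.lipschitzOnWith.absolutelyContinuousOnInterval
  have hderiv : ∫ t in a..b, deriv (fun u ↦ ∫ t in a..u, f t) t * t = ∫ t in a..b, t * f t := by
    refine integral_congr_ae ?_
    filter_upwards [hf.ae_hasDerivAt_integral] with t ht htab
    rw [(ht (uIoc_subset_uIcc htab) a left_mem_uIcc).deriv, mul_comm]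
  have := hG.integral_mul_deriv_eq_deriv_mul hid
  simp only [deriv_id, mul_one, integral_same, zero_mul, sub_zero, id] at this
  rw [this, hderiv, mul_comm]

theorem integral_comp_sub_right_eq_sub {g : ℝ → ℝ} {a b c : ℝ}
    (ha : IntervalIntegrable g volume 0 (a - c)) (hb : IntervalIntegrable g volume 0 (b - c)) :
    ∫ y in a..b, g (y - c) = (∫ u in 0..b - c, g u) - ∫ u in 0..a - c, g u := by
  rw [integral_comp_sub_right, integral_interval_sub_left hb ha]

theorem integral_comp_sub_left_eq_sub {g : ℝ → ℝ} {a b c : ℝ}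
    (ha : IntervalIntegrable g volume 0 (c - a)) (hb : IntervalIntegrable g volume 0 (c - b)) :
    ∫ x in a..b, g (c - x) = (∫ u in 0..c - a, g u) - ∫ u in 0..c - b, g u := by
  rw [integral_comp_sub_left, integral_interval_sub_left ha hb]

theorem integral_integral_comp_sub_eq_secondPrimitive {f : ℝ → ℝ} {a₁ b₁ a₂ b₂ : ℝ}
    (h₁ : a₁ ≤ b₁) (h₂ : b₁ ≤ a₂) (h₃ : a₂ ≤ b₂) (hf : IntervalIntegrable f volume 0 (b₂ - a₁)) :
    ∫ y in a₂..b₂, ∫ x in a₁..b₁, f (y - x) =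
      secondPrimitive f (b₂ - a₁) - secondPrimitive f (b₂ - b₁) - secondPrimitive f (a₂ - a₁) +
        secondPrimitive f (a₂ - b₁) := by
  set G : ℝ → ℝ := fun u ↦ ∫ t in (0:ℝ)..u, f t
  have hG : ContinuousOn G (Icc 0 (b₂ - a₁)) :=
    uIcc_of_le (by linarith : (0:ℝ) ≤ b₂ - a₁) ▸ continuousOn_primitive_interval' hf left_mem_uIcc
  have hf_of_mem {d} (hd : d ∈ Icc 0 (b₂ - a₁)) : IntervalIntegrable f volume 0 d :=
    hf.mono_set (uIcc_subset_uIcc_left (Icc_subset_uIcc hd))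
  have inner : EqOn (fun y ↦ ∫ x in a₁..b₁, f (y - x)) (fun y ↦ G (y - a₁) - G (y - b₁))
      (uIcc a₂ b₂) := by
    intro y hy
    obtain ⟨hy₁, hy₂⟩ : y ∈ Icc a₂ b₂ := uIcc_of_le h₃ ▸ hy
    exact integral_comp_sub_left_eq_sub (hf_of_mem ⟨by linarith, by linarith⟩)
      (hf_of_mem ⟨by linarith, by linarith⟩)
  have outer {c} (hc : c ∈ Icc a₁ b₁) :
      IntervalIntegrable (fun y ↦ G (y - c)) volume a₂ b₂ ∧
        ∫ y in a₂..b₂, G (y - c) = secondPrimitive f (b₂ - c) - secondPrimitive f (a₂ - c) := by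
    obtain ⟨hc₁, hc₂⟩ := hc
    refine ⟨ContinuousOn.intervalIntegrable ?_, integral_comp_sub_right_eq_sub ?_ ?_⟩
    · refine hG.comp (continuousOn_id.sub continuousOn_const) fun y hy ↦ ?_
      obtain ⟨hy₁, hy₂⟩ : y ∈ Icc a₂ b₂ := uIcc_of_le h₃ ▸ hy
      exact ⟨by linarith, by linarith⟩
    all_goals exact ContinuousOn.intervalIntegrable (hG.mono (uIcc_subset_Icc
      ⟨le_rfl, by linarith⟩ ⟨by linarith, by linarith⟩))
  rw [integral_congr inner, integral_sub (outer ⟨le_rfl, h₁⟩).1 (outer ⟨h₁, le_rfl⟩).1,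
    (outer ⟨le_rfl, h₁⟩).2, (outer ⟨h₁, le_rfl⟩).2]
  ring

theorem box_matrix_element_off_diagonal_general
    (a₁ b₁ a₂ b₂ : ℝ) (h₁ : a₁ < b₁) (h₂ : b₁ ≤ a₂) (h₃ : a₂ < b₂)
    (f : ℝ → ℝ)
    (hfi : IntegrableOn f (Set.Icc 0 (b₂ - a₁)))
    (F : ℝ → ℝ)
    (hF : ∀ x ∈ Set.Icc 0 (b₂ - a₁),
      F x = x * (∫ t in (0:ℝ)..x, f t) - ∫ t in (0:ℝ)..x, t * f t) :
    (∫ y in a₂..b₂, ∫ x in a₁..b₁, f (y - x)) =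
      F (b₂ - a₁) - F (b₂ - b₁) - F (a₂ - a₁) + F (a₂ - b₁) := by
  have hf : IntervalIntegrable f volume 0 (b₂ - a₁) :=
    (uIcc_of_le (by linarith : (0:ℝ) ≤ b₂ - a₁) ▸ hfi).intervalIntegrable
  have hF_eq {d} (h₀ : 0 ≤ d) (hd : d ≤ b₂ - a₁) : F d = secondPrimitive f d := by
    rw [hF d ⟨h₀, hd⟩, secondPrimitive, integral_primitive_eq_mul_integral_sub
      (hf.mono_set (uIcc_subset_uIcc_left (Icc_subset_uIcc ⟨h₀, hd⟩)))]
  rw [integral_integral_comp_sub_eq_secondPrimitive h₁.le h₂ h₃.le hf,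
    hF_eq (by linarith) le_rfl, hF_eq (by linarith) (by linarith),
    hF_eq (by linarith) (by linarith), hF_eq (by linarith) (by linarith)]

/-- Off-diagonal box-basis matrix element of a convolution kernel: for `a₁ < b₁ ≤ a₂ < b₂`
and `f` integrable on `[0, b₂ - a₁]`, with `F(x) = x·∫₀ˣ f - ∫₀ˣ t f(t) dt`,
`∫_{a₂}^{b₂} ∫_{a₁}^{b₁} f(y - x) dx dy = F(b₂-a₁) - F(b₂-b₁) - F(a₂-a₁) + F(a₂-b₁)`. -/
theorem box_matrix_element_off_diagonal
    (a₁ b₁ a₂ b₂ : ℝ) (h₁ : a₁ < b₁) (h₂ : b₁ ≤ a₂) (h₃ : a₂ < b₂)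
    (f : ℝ → ℝ) (hfm : Measurable f)
    (hfi : IntegrableOn f (Set.Icc 0 (b₂ - a₁)))
    (F : ℝ → ℝ)
    (hF : ∀ x ∈ Set.Icc 0 (b₂ - a₁),
      F x = x * (∫ t in (0:ℝ)..x, f t) - ∫ t in (0:ℝ)..x, t * f t) :
    (∫ y in a₂..b₂, ∫ x in a₁..b₁, f (y - x)) =
      F (b₂ - a₁) - F (b₂ - b₁) - F (a₂ - a₁) + F (a₂ - b₁) :=
  box_matrix_element_off_diagonal_general a₁ b₁ a₂ b₂ h₁ h₂ h₃ f hfi F hF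
end

section
/- Let a < b be real numbers and f : ℝ → ℝ measurable and Lebesgue integrable on [0, b − a], and define F(x) := x·∫₀ˣ f(t) dt − ∫₀ˣ t·f(t) dt for x ∈ [0, b − a]. Then ∫_{a}^{b} ∫_{a}^{b} f(|x − y|) dx dy = 2·F(b − a). -/
/-!
With `G x = ∫₀ˣ f` and `c = b - a`, splitting `[a, b]` at `y` and translating turns the inner
integral into `G (y - a) + G (b - y)`, so the double integral is `2 ∫₀^c G`. The primitive `G` is
absolutely continuous with `G' = f` a.e. (Lebesgue differentiation), so integrating by parts
against `x` gives `∫₀^c G = c G(c) - ∫₀^c t f(t) dt`.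
-/

open MeasureTheory intervalIntegral Set

section
variable {E : Type*} [NormedAddCommGroup E] [NormedSpace ℝ E] {a b : ℝ}

theorem integral_comp_abs_sub [CompleteSpace E] {f : ℝ → E} {y : ℝ} (hy : y ∈ Icc a b)
    (hfl : IntervalIntegrable f volume 0 (y - a)) (hfr : IntervalIntegrable f volume 0 (b - y)) :
    ∫ x in a..b, f |x - y| = (∫ t in 0..y - a, f t) + ∫ t in 0..b - y, f t := by
  have hl : EqOn (fun x => f |x - y|) (fun x => f (y - x)) (uIcc a y) := fun x hx => by
    rw [uIcc_of_le hy.1] at hx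
    simp only [abs_sub_comm x y, abs_of_nonneg (sub_nonneg.2 hx.2)]
  have hr : EqOn (fun x => f |x - y|) (fun x => f (x - y)) (uIcc y b) := fun x hx => by
    rw [uIcc_of_le hy.2] at hx
    simp only [abs_of_nonneg (sub_nonneg.2 hx.1)]
  have hil : IntervalIntegrable (fun x => f |x - y|) volume a y :=
    (intervalIntegrable_congr (hl.mono uIoc_subset_uIcc)).mpr <| by
      simpa using (hfl.comp_sub_left y).symm
  have hir : IntervalIntegrable (fun x => f |x - y|) volume y b :=
    (intervalIntegrable_congr (hr.mono uIoc_subset_uIcc)).mpr <| by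
      simpa using hfr.comp_sub_right y
  rw [← integral_add_adjacent_intervals hil hir, integral_congr hl, integral_congr hr,
    integral_comp_sub_left f y, integral_comp_sub_right f y]
  simp only [sub_self]

theorem integral_comp_sub_add_comp_sub_eq_two_smul {g : ℝ → E}
    (hg : IntervalIntegrable g volume 0 (b - a)) :
    ∫ y in a..b, (g (y - a) + g (b - y)) = (2 : ℝ) • ∫ t in 0..b - a, g t := by
  have hl : IntervalIntegrable (fun y => g (y - a)) volume a b := by
    simpa using hg.comp_sub_right a
  have hr : IntervalIntegrable (fun y => g (b - y)) volume a b := by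
    simpa using (hg.comp_sub_left b).symm
  rw [integral_add hl hr, integral_comp_sub_right g a, integral_comp_sub_left g b, sub_self,
    sub_self, two_smul]

end

theorem integral_primitive_eq_mul_integral_sub_integral_mul {f : ℝ → ℝ} {a b : ℝ}
    (hf : IntervalIntegrable f volume a b) :
    ∫ x in a..b, (∫ t in a..x, f t) = b * (∫ t in a..b, f t) - ∫ t in a..b, t * f t := by
  have hG := hf.absolutelyContinuousOnInterval_intervalIntegral left_mem_uIcc
  have hid : AbsolutelyContinuousOnInterval id a b :=
    LipschitzWith.id.lipschitzOnWith.absolutelyContinuousOnInterval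
  have hderiv : ∀ᵐ x, x ∈ uIoc a b → deriv (fun x => ∫ t in a..x, f t) x * x = x * f x := by
    filter_upwards [hf.ae_hasDerivAt_integral] with x hx hxab
    rw [(hx (uIoc_subset_uIcc hxab) a left_mem_uIcc).deriv, mul_comm]
  have hparts := hG.integral_mul_deriv_eq_deriv_mul hid
  simp only [deriv_id, mul_one, integral_same, zero_mul, sub_zero, id] at hparts
  rw [hparts, integral_congr_ae hderiv, mul_comm]

theorem box_matrix_element_diagonal_general
    (a b : ℝ) (hab : a < b)
    (f : ℝ → ℝ)
    (hfi : IntegrableOn f (Set.Icc 0 (b - a)))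
    (F : ℝ → ℝ)
    (hF : ∀ x ∈ Set.Icc 0 (b - a),
      F x = x * (∫ t in (0:ℝ)..x, f t) - ∫ t in (0:ℝ)..x, t * f t) :
    (∫ y in a..b, ∫ x in a..b, f |x - y|) = 2 * F (b - a) := by
  have hc : 0 ≤ b - a := (sub_pos.2 hab).le
  have hf : IntervalIntegrable f volume 0 (b - a) :=
    (intervalIntegrable_iff_integrableOn_Icc_of_le hc).2 hfi
  have hf_sub : ∀ s ∈ Icc 0 (b - a), IntervalIntegrable f volume 0 s := fun s hs =>
    hf.mono_set (uIcc_subset_uIcc_left (by rwa [uIcc_of_le hc]))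
  have hG : IntervalIntegrable (fun x => ∫ t in 0..x, f t) volume 0 (b - a) :=
    (hf.absolutelyContinuousOnInterval_intervalIntegral left_mem_uIcc).continuousOn
      |>.intervalIntegrable
  calc (∫ y in a..b, ∫ x in a..b, f |x - y|)
      = ∫ y in a..b, ((∫ t in 0..y - a, f t) + ∫ t in 0..b - y, f t) := by
        refine integral_congr fun y hy => ?_
        rw [uIcc_of_le hab.le] at hy
        exact integral_comp_abs_sub hy (hf_sub _ ⟨by linarith [hy.1], by linarith [hy.2]⟩)
          (hf_sub _ ⟨by linarith [hy.2], by linarith [hy.1]⟩)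
    _ = 2 * ∫ x in 0..b - a, ∫ t in 0..x, f t :=
        integral_comp_sub_add_comp_sub_eq_two_smul hG
    _ = 2 * F (b - a) := by
        rw [integral_primitive_eq_mul_integral_sub_integral_mul hf, hF _ (right_mem_Icc.2 hc)]

/-- Diagonal box-basis matrix element of a convolution kernel: for `a < b` and `f`
integrable on `[0, b - a]`, with `F(x) = x·∫₀ˣ f - ∫₀ˣ t f(t) dt`,
`∫_a^b ∫_a^b f(|x - y|) dx dy = 2 F(b - a)`. -/
theorem box_matrix_element_diagonal
    (a b : ℝ) (hab : a < b)
    (f : ℝ → ℝ) (hfm : Measurable f)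
    (hfi : IntegrableOn f (Set.Icc 0 (b - a)))
    (F : ℝ → ℝ)
    (hF : ∀ x ∈ Set.Icc 0 (b - a),
      F x = x * (∫ t in (0:ℝ)..x, f t) - ∫ t in (0:ℝ)..x, t * f t) :
    (∫ y in a..b, ∫ x in a..b, f |x - y|) = 2 * F (b - a) :=
  box_matrix_element_diagonal_general a b hab f hfi F hF
end

section
/- Let σ > 0 and μ ∈ ℝ, and let h : ℝ → ℝ be the normalized Gaussian h(x) = (πσ²)^{−1/4} · exp(−(x−μ)²/(2σ²)). Then ∫_ℝ 2π·min(1 − x, 1 + x)·h(x)² dx = 2π·(1 − μ·erf(μ/σ)) − 2σ·√π·exp(−μ²/σ²), where erf(z) := (2/√π)·∫₀ᶻ exp(−t²) dt is the Gaussian error function. -/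
/-!
Up to the factor `(√π σ)⁻¹`, `h²` is the bump `exp (-((x - μ) / σ) ^ 2)`. On each half-line
`x ≤ 0`, `x > 0` the tent `min (1 - x) (1 + x)` is affine, and an affine function `p + q x` times
the bump has the explicit primitive `(p + q μ) σ Φ((x - μ) / σ) - q σ² / 2 · exp (-((x - μ) / σ) ^ 2)`,
where `Φ u = ∫₀ᵘ exp (-t²)` tends to `±√π / 2` at `±∞`. Since `Φ` is odd, the two boundary
terms at `0` combine into `-2 μ σ Φ(μ / σ)`, which is the `erf` term.
-/

open MeasureTheory Real intervalIntegral Filter Topology Set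

noncomputable section

def gaussBump (t : ℝ) : ℝ := exp (-t ^ 2)

def gaussPrimitive (u : ℝ) : ℝ := ∫ t in (0 : ℝ)..u, gaussBump t

lemma continuous_gaussBump : Continuous gaussBump := by
  unfold gaussBump
  fun_prop

lemma gaussBump_neg (t : ℝ) : gaussBump (-t) = gaussBump t := by
  rw [gaussBump, gaussBump, neg_sq]

lemma hasDerivAt_gaussBump (t : ℝ) : HasDerivAt gaussBump (-2 * t * gaussBump t) t := by
  have h : HasDerivAt (fun t : ℝ => -t ^ 2) (-(2 * t)) t := by
    simpa using (hasDerivAt_pow 2 t).fun_neg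
  exact h.exp.congr_deriv (by rw [gaussBump]; ring)

lemma tendsto_gaussBump_cocompact : Tendsto gaussBump (cocompact ℝ) (𝓝 0) := by
  have h := tendsto_rpow_abs_mul_exp_neg_mul_sq_cocompact one_pos 0
  simp only [rpow_zero, one_mul, neg_one_mul] at h
  exact h

lemma integrable_gaussBump : Integrable gaussBump := by
  have h := integrable_exp_neg_mul_sq one_pos
  simp only [neg_one_mul] at h
  exact h

lemma integrable_affine_mul_gaussBump (a b : ℝ) :
    Integrable fun t => (a + b * t) * gaussBump t := by
  have h1 : Integrable fun t => t * gaussBump t := by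
    have h := integrable_mul_exp_neg_mul_sq one_pos
    simp only [neg_one_mul] at h
    exact h
  refine ((integrable_gaussBump.const_mul a).add (h1.const_mul b)).congr (.of_forall fun t => ?_)
  simp only [Pi.add_apply]
  ring

lemma hasDerivAt_gaussPrimitive (u : ℝ) : HasDerivAt gaussPrimitive (gaussBump u) u :=
  (continuous_gaussBump.integral_hasStrictDerivAt 0 u).hasDerivAt

lemma gaussPrimitive_neg (u : ℝ) : gaussPrimitive (-u) = -gaussPrimitive u := by
  have h := integral_comp_neg (a := 0) (b := u) gaussBump
  simp only [gaussBump_neg, neg_zero] at h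
  rw [gaussPrimitive, gaussPrimitive, integral_symm]
  exact congrArg Neg.neg h.symm

lemma tendsto_gaussPrimitive_atTop : Tendsto gaussPrimitive atTop (𝓝 (√π / 2)) := by
  have h := intervalIntegral_tendsto_integral_Ioi 0 integrable_gaussBump.integrableOn tendsto_id
  have hI : ∫ t in Ioi (0 : ℝ), gaussBump t = √π / 2 := by
    simpa [gaussBump] using integral_gaussian_Ioi 1
  rwa [hI] at h

lemma tendsto_gaussPrimitive_atBot : Tendsto gaussPrimitive atBot (𝓝 (-(√π / 2))) := by
  have h := (tendsto_gaussPrimitive_atTop.comp tendsto_neg_atBot_atTop).neg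
  refine h.congr fun u => ?_
  simp [gaussPrimitive_neg]

def affineGaussPrimitive (σ μ p q x : ℝ) : ℝ :=
  (p + q * μ) * σ * gaussPrimitive ((x - μ) / σ) - q * σ ^ 2 / 2 * gaussBump ((x - μ) / σ)

section AffineGauss

variable {σ : ℝ} (μ p q : ℝ)

lemma hasDerivAt_affineGaussPrimitive (hσ : σ ≠ 0) (x : ℝ) :
    HasDerivAt (affineGaussPrimitive σ μ p q) ((p + q * x) * gaussBump ((x - μ) / σ)) x := by
  have hu : HasDerivAt (fun x => (x - μ) / σ) σ⁻¹ x := by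
    simpa [div_eq_mul_inv] using ((hasDerivAt_id x).sub_const μ).div_const σ
  have hΦ := (hasDerivAt_gaussPrimitive _).comp x hu
  have hg := (hasDerivAt_gaussBump _).comp x hu
  refine ((hΦ.const_mul ((p + q * μ) * σ)).sub (hg.const_mul (q * σ ^ 2 / 2))).congr_deriv ?_
  field_simp
  ring

lemma integrable_affine_mul_gaussBump_comp (hσ : σ ≠ 0) :
    Integrable fun x => (p + q * x) * gaussBump ((x - μ) / σ) := by
  have h := ((integrable_affine_mul_gaussBump (p + q * μ) (q * σ)).comp_div hσ).comp_sub_right μ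
  refine h.congr (.of_forall fun x => ?_)
  field_simp
  ring

lemma tendsto_affineGaussPrimitive_atTop (hσ : 0 < σ) :
    Tendsto (affineGaussPrimitive σ μ p q) atTop (𝓝 ((p + q * μ) * σ * (√π / 2))) := by
  have hu : Tendsto (fun x => (x - μ) / σ) atTop atTop :=
    (tendsto_atTop_add_const_right _ (-μ) tendsto_id).atTop_div_const hσ
  have hΦ := tendsto_gaussPrimitive_atTop.comp hu
  have hg := tendsto_gaussBump_cocompact.comp (hu.mono_right atTop_le_cocompact)
  have h := (hΦ.const_mul ((p + q * μ) * σ)).sub (hg.const_mul (q * σ ^ 2 / 2))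
  rwa [mul_zero, sub_zero] at h

lemma tendsto_affineGaussPrimitive_atBot (hσ : 0 < σ) :
    Tendsto (affineGaussPrimitive σ μ p q) atBot (𝓝 (-((p + q * μ) * σ * (√π / 2)))) := by
  have hu : Tendsto (fun x => (x - μ) / σ) atBot atBot :=
    (tendsto_atBot_add_const_right _ (-μ) tendsto_id).atBot_div_const hσ
  have hΦ := tendsto_gaussPrimitive_atBot.comp hu
  have hg := tendsto_gaussBump_cocompact.comp (hu.mono_right atBot_le_cocompact)
  have h := (hΦ.const_mul ((p + q * μ) * σ)).sub (hg.const_mul (q * σ ^ 2 / 2))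
  rwa [mul_zero, sub_zero, mul_neg] at h

lemma integral_Ioi_affine_mul_gaussBump (hσ : 0 < σ) (a : ℝ) :
    ∫ x in Ioi a, (p + q * x) * gaussBump ((x - μ) / σ) =
      (p + q * μ) * σ * (√π / 2) - affineGaussPrimitive σ μ p q a :=
  integral_Ioi_of_hasDerivAt_of_tendsto'
    (fun x _ => hasDerivAt_affineGaussPrimitive μ p q hσ.ne' x)
    (integrable_affine_mul_gaussBump_comp μ p q hσ.ne').integrableOn
    (tendsto_affineGaussPrimitive_atTop μ p q hσ)

lemma integral_Iic_affine_mul_gaussBump (hσ : 0 < σ) (a : ℝ) :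
    ∫ x in Iic a, (p + q * x) * gaussBump ((x - μ) / σ) =
      affineGaussPrimitive σ μ p q a + (p + q * μ) * σ * (√π / 2) := by
  rw [integral_Iic_of_hasDerivAt_of_tendsto'
    (fun x _ => hasDerivAt_affineGaussPrimitive μ p q hσ.ne' x)
    (integrable_affine_mul_gaussBump_comp μ p q hσ.ne').integrableOn
    (tendsto_affineGaussPrimitive_atBot μ p q hσ), sub_neg_eq_add]

lemma integral_tent_mul_gaussBump (hσ : 0 < σ) :
    ∫ x, min (1 - x) (1 + x) * gaussBump ((x - μ) / σ) =
      σ * √π - 2 * μ * σ * gaussPrimitive (μ / σ) - σ ^ 2 * gaussBump (μ / σ) := by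
  have hIic : EqOn (fun x => (1 + 1 * x) * gaussBump ((x - μ) / σ))
      (fun x => min (1 - x) (1 + x) * gaussBump ((x - μ) / σ)) (Iic 0) := by
    intro x (hx : x ≤ 0)
    simp only [one_mul, min_eq_right (by linarith : 1 + x ≤ 1 - x)]
  have hIoi : EqOn (fun x => (1 + -1 * x) * gaussBump ((x - μ) / σ))
      (fun x => min (1 - x) (1 + x) * gaussBump ((x - μ) / σ)) (Ioi 0) := by
    intro x (hx : 0 < x)
    simp only [neg_one_mul, ← sub_eq_add_neg, min_eq_left (by linarith : 1 - x ≤ 1 + x)]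
  rw [← integral_Iic_add_Ioi (b := 0), ← setIntegral_congr_fun measurableSet_Iic hIic,
    ← setIntegral_congr_fun measurableSet_Ioi hIoi, integral_Iic_affine_mul_gaussBump _ _ _ hσ,
    integral_Ioi_affine_mul_gaussBump _ _ _ hσ]
  · have h0 : (0 - μ) / σ = -(μ / σ) := by ring
    simp only [affineGaussPrimitive, h0, gaussPrimitive_neg, gaussBump_neg]
    ring
  · exact (integrable_affine_mul_gaussBump_comp μ 1 1 hσ.ne').integrableOn.congr_fun hIic
      measurableSet_Iic
  · exact (integrable_affine_mul_gaussBump_comp μ 1 (-1) hσ.ne').integrableOn.congr_fun hIoi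
      measurableSet_Ioi

lemma sq_normalizedGaussian (hσ : 0 < σ) (x : ℝ) :
    ((π * σ ^ 2) ^ (-(1 : ℝ) / 4) * exp (-(x - μ) ^ 2 / (2 * σ ^ 2))) ^ 2 =
      (√π * σ)⁻¹ * gaussBump ((x - μ) / σ) := by
  have hC : ((π * σ ^ 2) ^ (-(1 : ℝ) / 4)) ^ 2 = (√π * σ)⁻¹ := by
    have hexp : -(1 : ℝ) / 4 * (2 : ℕ) = -(1 / 2) := by norm_num
    rw [← rpow_natCast, ← rpow_mul (by positivity), hexp, rpow_neg (by positivity),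
      ← sqrt_eq_rpow, sqrt_mul pi_pos.le, sqrt_sq hσ.le]
  rw [mul_pow, hC, ← exp_nat_mul, gaussBump]
  congr 2
  field_simp
  ring

end AffineGauss

end

/-- Expectation value of the piecewise-linear reference multiplier `2π·min(1-x, 1+x)` in a
normalized Gaussian `h(x) = (πσ²)^{-1/4} exp(-(x-μ)²/(2σ²))`:
`∫ 2π·min(1-x, 1+x)·h(x)² dx = 2π(1 - μ·erf(μ/σ)) - 2σ√π·exp(-μ²/σ²)`,
where `erf(z) = (2/√π)·∫₀ᶻ exp(-t²) dt`. -/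
theorem gaussian_expectation_piecewise_linear_reference
    (σ μ : ℝ) (hσ : 0 < σ) (h : ℝ → ℝ)
    (hh : ∀ x : ℝ, h x = (π * σ ^ 2) ^ (-(1 : ℝ) / 4) * Real.exp (-(x - μ) ^ 2 / (2 * σ ^ 2)))
    (erf : ℝ → ℝ)
    (herf : ∀ z : ℝ, erf z = 2 / Real.sqrt π * ∫ t in (0:ℝ)..z, Real.exp (-t ^ 2)) :
    (∫ x : ℝ, 2 * π * min (1 - x) (1 + x) * (h x) ^ 2) =
      2 * π * (1 - μ * erf (μ / σ)) - 2 * σ * Real.sqrt π * Real.exp (-μ ^ 2 / σ ^ 2) := by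
  have hsq : ∀ x, 2 * π * min (1 - x) (1 + x) * h x ^ 2 =
      2 * π * (√π * σ)⁻¹ * (min (1 - x) (1 + x) * gaussBump ((x - μ) / σ)) := fun x => by
    rw [hh, sq_normalizedGaussian μ hσ]
    ring
  have hbump : gaussBump (μ / σ) = exp (-μ ^ 2 / σ ^ 2) := by rw [gaussBump, div_pow, neg_div]
  have herf' : erf (μ / σ) = 2 / √π * gaussPrimitive (μ / σ) := herf _
  have hπ : √π * √π = π := mul_self_sqrt pi_pos.le
  simp_rw [hsq]
  rw [MeasureTheory.integral_const_mul, integral_tent_mul_gaussBump μ hσ, herf', ← hbump]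
  field_simp
  linear_combination σ * gaussBump (μ / σ) * hπ
end

section
/- Let m > 0 and let φ : ℝ → ℝ be continuous with compact support contained in (0, ∞). Define G : (0,∞) × (0,∞) → ℝ by G(r,s) := exp(−m·R)·(1 + 1/(m·R))·(cosh(m·ρ) − sinh(m·ρ)/(m·ρ)) / (m·r·s), where R := max(r,s) and ρ := min(r,s), and set u(r) := ∫₀^∞ G(r,s)·φ(s)·s² ds for r > 0. Then u is twice continuously differentiable on (0, ∞) and satisfies −u''(r) − (2/r)·u'(r) + (2/r²)·u(r) + m²·u(r) = φ(r) for all r > 0. -/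
/-!
The kernel `G` is the variation-of-parameters kernel of the radial operator built from the two
homogeneous solutions `i₁(m r)` (regular at `0`) and `k₁(m r)` (decaying at `∞`), whose Wronskian
is `1 / (m r²)`. Splitting the integral at `s = r` writes
`u = k₁(m·) F + i₁(m·) H` with `F' = i₁(m·) ψ`, `H' = -k₁(m·) ψ` and `ψ(s) = m s² φ(s)`.
Differentiating once, the terms coming from `F'` and `H'` cancel; differentiating again they
leave the Wronskian times `ψ`, which is `φ`.
-/

open MeasureTheory Real Set Filter Topology

structure SolvesLinearODEOn (p q f : ℝ → ℝ) (s : Set ℝ) (y y' y'' : ℝ → ℝ) : Prop where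
  hasDerivAt : ∀ x ∈ s, HasDerivAt y (y' x) x
  hasDerivAt_deriv : ∀ x ∈ s, HasDerivAt y' (y'' x) x
  continuousOn_deriv2 : ContinuousOn y'' s
  eq : ∀ x ∈ s, -y'' x - p x * y' x + q x * y x = f x

namespace SolvesLinearODEOn

variable {p q f : ℝ → ℝ} {s t : Set ℝ} {y y' y'' : ℝ → ℝ}

lemma mono (h : SolvesLinearODEOn p q f s y y' y'') (hts : t ⊆ s) :
    SolvesLinearODEOn p q f t y y' y'' where
  hasDerivAt x hx := h.hasDerivAt x (hts hx)
  hasDerivAt_deriv x hx := h.hasDerivAt_deriv x (hts hx)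
  continuousOn_deriv2 := h.continuousOn_deriv2.mono hts
  eq x hx := h.eq x (hts hx)

lemma contDiffOn (h : SolvesLinearODEOn p q f s y y' y'') (hs : IsOpen s) :
    ContDiffOn ℝ 2 y s := by
  have hy' : ContDiffOn ℝ 1 y' s := by
    rw [show (1 : WithTop ℕ∞) = 0 + 1 from rfl, contDiffOn_succ_iff_deriv_of_isOpen hs,
      contDiffOn_zero]
    exact ⟨fun x hx => (h.hasDerivAt_deriv x hx).differentiableAt.differentiableWithinAt,
      by simp, h.continuousOn_deriv2.congr fun x hx => (h.hasDerivAt_deriv x hx).deriv⟩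
  rw [show (2 : WithTop ℕ∞) = 1 + 1 from rfl, contDiffOn_succ_iff_deriv_of_isOpen hs]
  exact ⟨fun x hx => (h.hasDerivAt x hx).differentiableAt.differentiableWithinAt,
    by simp, hy'.congr fun x hx => (h.hasDerivAt x hx).deriv⟩

lemma congr (h : SolvesLinearODEOn p q f s y y' y'') (hs : IsOpen s) {u : ℝ → ℝ}
    (hu : EqOn u y s) : SolvesLinearODEOn p q f s u (deriv u) (deriv (deriv u)) := by
  have hu' : ∀ x ∈ s, HasDerivAt u (y' x) x := fun x hx =>
    (h.hasDerivAt x hx).congr_of_eventuallyEq (eventuallyEq_of_mem (hs.mem_nhds hx) hu)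
  have hdu : EqOn (deriv u) y' s := fun x hx => (hu' x hx).deriv
  have hdu' : ∀ x ∈ s, HasDerivAt (deriv u) (y'' x) x := fun x hx =>
    (h.hasDerivAt_deriv x hx).congr_of_eventuallyEq (eventuallyEq_of_mem (hs.mem_nhds hx) hdu)
  have hddu : EqOn (deriv (deriv u)) y'' s := fun x hx => (hdu' x hx).deriv
  refine ⟨fun x hx => hdu hx ▸ hu' x hx, fun x hx => hddu hx ▸ hdu' x hx,
    h.continuousOn_deriv2.congr hddu, fun x hx => ?_⟩
  rw [hu hx, hdu hx, hddu hx]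
  exact h.eq x hx

lemma comp_const_mul {α c m : ℝ} (hm : m ≠ 0)
    (h : SolvesLinearODEOn (fun z => α / z) (fun z => c / z ^ 2 + 1) 0 {0}ᶜ y y' y'') :
    SolvesLinearODEOn (fun x => α / x) (fun x => c / x ^ 2 + m ^ 2) 0 {0}ᶜ
      (fun x => y (m * x)) (fun x => m * y' (m * x)) (fun x => m ^ 2 * y'' (m * x)) := by
  have hmx {x : ℝ} (hx : x ∈ ({0}ᶜ : Set ℝ)) : m * x ∈ ({0}ᶜ : Set ℝ) := mul_ne_zero hm hx
  have hmul (x : ℝ) : HasDerivAt (fun x => m * x) m x := by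
    simpa using (hasDerivAt_id x).const_mul m
  refine ⟨fun x hx => ?_, fun x hx => ?_, ?_, fun x hx => ?_⟩
  · exact ((h.hasDerivAt _ (hmx hx)).comp x (hmul x)).congr_deriv (mul_comm _ _)
  · exact (((h.hasDerivAt_deriv _ (hmx hx)).comp x (hmul x)).const_mul m).congr_deriv (by ring)
  · exact continuousOn_const.mul
      (h.continuousOn_deriv2.comp (continuous_const_mul m).continuousOn fun x hx => hmx hx)
  · have hx : x ≠ 0 := hx
    calc -(m ^ 2 * y'' (m * x)) - α / x * (m * y' (m * x)) + (c / x ^ 2 + m ^ 2) * y (m * x)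
        = m ^ 2 * (-y'' (m * x) - α / (m * x) * y' (m * x) +
            (c / (m * x) ^ 2 + 1) * y (m * x)) := by
          field_simp
      _ = 0 := by simp [h.eq _ (hmx hx)]

lemma variation_of_parameters {a a' a'' b b' b'' F H ψ : ℝ → ℝ}
    (ha : SolvesLinearODEOn p q 0 s a a' a'') (hb : SolvesLinearODEOn p q 0 s b b' b'')
    (hF : ∀ x ∈ s, HasDerivAt F (a x * ψ x) x) (hH : ∀ x ∈ s, HasDerivAt H (-(b x * ψ x)) x)
    (hψ : ContinuousOn ψ s) (hf : ∀ x ∈ s, (a' x * b x - a x * b' x) * ψ x = f x) :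
    SolvesLinearODEOn p q f s (fun x => b x * F x + a x * H x) (fun x => b' x * F x + a' x * H x)
      (fun x => b'' x * F x + a'' x * H x - (a' x * b x - a x * b' x) * ψ x) := by
  refine ⟨fun x hx => ?_, fun x hx => ?_, ?_, fun x hx => ?_⟩
  · exact (((hb.hasDerivAt x hx).mul (hF x hx)).add
      ((ha.hasDerivAt x hx).mul (hH x hx))).congr_deriv (by ring)
  · exact (((hb.hasDerivAt_deriv x hx).mul (hF x hx)).add
      ((ha.hasDerivAt_deriv x hx).mul (hH x hx))).congr_deriv (by ring)
  · have ha' := HasDerivAt.continuousOn ha.hasDerivAt_deriv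
    have hb' := HasDerivAt.continuousOn hb.hasDerivAt_deriv
    have ha₀ := HasDerivAt.continuousOn ha.hasDerivAt
    have hb₀ := HasDerivAt.continuousOn hb.hasDerivAt
    exact ((hb.continuousOn_deriv2.mul (HasDerivAt.continuousOn hF)).add
      (ha.continuousOn_deriv2.mul (HasDerivAt.continuousOn hH))).sub
      (((ha'.mul hb₀).sub (ha₀.mul hb')).mul hψ)
  · have hax := ha.eq x hx
    have hbx := hb.eq x hx
    simp only [Pi.zero_apply] at hax hbx
    rw [← hf x hx]
    linear_combination F x * hbx + H x * hax

end SolvesLinearODEOn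

lemma ContinuousOn.continuous_mul_of_tsupport_subset {X R : Type*} [TopologicalSpace X]
    [TopologicalSpace R] [MulZeroClass R] [ContinuousMul R] {a ψ : X → R} {U : Set X}
    (ha : ContinuousOn a U) (hU : IsOpen U) (hψ : Continuous ψ) (hψU : tsupport ψ ⊆ U) :
    Continuous fun x => a x * ψ x :=
  (ha.mul hψ.continuousOn).continuous_of_tsupport_subset hU (tsupport_mul_subset_right.trans hψU)

lemma hasDerivAt_integral_Ioi {f : ℝ → ℝ} (hf : Integrable f) (hc : Continuous f) (r : ℝ) :
    HasDerivAt (fun t => ∫ s in Ioi t, f s) (-f r) r := by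
  have h : (fun t => ∫ s in Ioi t, f s) = fun t => (∫ s in Ioi 0, f s) - ∫ s in 0..t, f s := by
    funext t
    rw [← intervalIntegral.integral_Ioi_sub_Ioi' hf.integrableOn hf.integrableOn, sub_sub_cancel]
  rw [h]
  exact ((hc.integral_hasStrictDerivAt 0 r).hasDerivAt.const_sub _)

lemma integral_Ioi_mul_max_min {a b ψ : ℝ → ℝ} {c r : ℝ} (hcr : c ≤ r)
    (ha : IntervalIntegrable (fun s => a s * ψ s) volume c r)
    (hb : IntegrableOn (fun s => b s * ψ s) (Ioi r)) :
    ∫ s in Ioi c, b (max r s) * a (min r s) * ψ s =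
      b r * (∫ s in c..r, a s * ψ s) + a r * ∫ s in Ioi r, b s * ψ s := by
  have hlow : EqOn (fun s => b r * (a s * ψ s)) (fun s => b (max r s) * a (min r s) * ψ s)
      (uIcc c r) := fun s hs => by
    rw [uIcc_of_le hcr] at hs
    simp only [max_eq_left hs.2, min_eq_right hs.2, mul_assoc]
  have hhigh : EqOn (fun s => a r * (b s * ψ s)) (fun s => b (max r s) * a (min r s) * ψ s)
      (Ioi r) := fun s (hs : r < s) => by
    simp only [max_eq_right hs.le, min_eq_left hs.le]
    ring
  rw [← intervalIntegral.integral_interval_add_Ioi'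
      ((ha.const_mul (b r)).congr (hlow.mono uIoc_subset_uIcc))
      (IntegrableOn.congr_fun (hb.const_mul (a r)) hhigh measurableSet_Ioi),
    ← intervalIntegral.integral_congr hlow, ← setIntegral_congr_fun measurableSet_Ioi hhigh,
    intervalIntegral.integral_const_mul, integral_const_mul]

/- The modified spherical Bessel functions of order one, with their first two derivatives:
`sphericalI₁ z = √(π/(2z)) I_{3/2}(z)` and `sphericalK₁ z = √(2/(πz)) K_{3/2}(z)`. -/
noncomputable def sphericalI₁ (z : ℝ) : ℝ := cosh z / z - sinh z / z ^ 2
noncomputable def sphericalI₁' (z : ℝ) : ℝ := sinh z / z - 2 * cosh z / z ^ 2 + 2 * sinh z / z ^ 3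
noncomputable def sphericalI₁'' (z : ℝ) : ℝ :=
  cosh z / z - 3 * sinh z / z ^ 2 + 6 * cosh z / z ^ 3 - 6 * sinh z / z ^ 4
noncomputable def sphericalK₁ (z : ℝ) : ℝ := exp (-z) * (1 / z + 1 / z ^ 2)
noncomputable def sphericalK₁' (z : ℝ) : ℝ := -exp (-z) * (1 / z + 2 / z ^ 2 + 2 / z ^ 3)
noncomputable def sphericalK₁'' (z : ℝ) : ℝ :=
  exp (-z) * (1 / z + 3 / z ^ 2 + 6 / z ^ 3 + 6 / z ^ 4)

section SphericalBessel

variable {z : ℝ}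

lemma hasDerivAt_sphericalI₁ (hz : z ≠ 0) : HasDerivAt sphericalI₁ (sphericalI₁' z) z := by
  refine (((hasDerivAt_cosh z).div (hasDerivAt_id z) hz).sub
    ((hasDerivAt_sinh z).div (hasDerivAt_pow 2 z) (pow_ne_zero 2 hz))).congr_deriv ?_
  simp only [sphericalI₁', id]
  field_simp
  ring

lemma hasDerivAt_sphericalI₁' (hz : z ≠ 0) : HasDerivAt sphericalI₁' (sphericalI₁'' z) z := by
  refine ((((hasDerivAt_sinh z).div (hasDerivAt_id z) hz).sub
    (((hasDerivAt_cosh z).const_mul 2).div (hasDerivAt_pow 2 z) (pow_ne_zero 2 hz))).add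
    (((hasDerivAt_sinh z).const_mul 2).div (hasDerivAt_pow 3 z)
      (pow_ne_zero 3 hz))).congr_deriv ?_
  simp only [sphericalI₁'', id]
  field_simp
  ring

lemma hasDerivAt_sphericalK₁ (hz : z ≠ 0) : HasDerivAt sphericalK₁ (sphericalK₁' z) z := by
  refine ((hasDerivAt_neg z).exp.mul
    (((hasDerivAt_const z 1).div (hasDerivAt_id z) hz).add
      ((hasDerivAt_const z 1).div (hasDerivAt_pow 2 z) (pow_ne_zero 2 hz)))).congr_deriv ?_
  simp only [sphericalK₁', id, Pi.div_apply, Pi.add_apply]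
  field_simp
  ring

lemma hasDerivAt_sphericalK₁' (hz : z ≠ 0) : HasDerivAt sphericalK₁' (sphericalK₁'' z) z := by
  refine ((hasDerivAt_neg z).exp.neg.mul
    ((((hasDerivAt_const z 1).div (hasDerivAt_id z) hz).add
      ((hasDerivAt_const z 2).div (hasDerivAt_pow 2 z) (pow_ne_zero 2 hz))).add
      ((hasDerivAt_const z 2).div (hasDerivAt_pow 3 z) (pow_ne_zero 3 hz)))).congr_deriv ?_
  simp only [sphericalK₁'', id, Pi.div_apply, Pi.add_apply, Pi.neg_apply]
  field_simp
  ring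

lemma solvesLinearODEOn_sphericalI₁ :
    SolvesLinearODEOn (fun z => 2 / z) (fun z => 2 / z ^ 2 + 1) 0 {0}ᶜ
      sphericalI₁ sphericalI₁' sphericalI₁'' where
  hasDerivAt _ hz := hasDerivAt_sphericalI₁ hz
  hasDerivAt_deriv _ hz := hasDerivAt_sphericalI₁' hz
  continuousOn_deriv2 z hz := by
    have hz : z ≠ 0 := hz
    unfold sphericalI₁''
    exact ContinuousAt.continuousWithinAt (by fun_prop (disch := positivity))
  eq z hz := by
    have hz : z ≠ 0 := hz
    simp only [sphericalI₁, sphericalI₁', sphericalI₁'', Pi.zero_apply]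
    field_simp
    ring

lemma solvesLinearODEOn_sphericalK₁ :
    SolvesLinearODEOn (fun z => 2 / z) (fun z => 2 / z ^ 2 + 1) 0 {0}ᶜ
      sphericalK₁ sphericalK₁' sphericalK₁'' where
  hasDerivAt _ hz := hasDerivAt_sphericalK₁ hz
  hasDerivAt_deriv _ hz := hasDerivAt_sphericalK₁' hz
  continuousOn_deriv2 z hz := by
    have hz : z ≠ 0 := hz
    unfold sphericalK₁''
    exact ContinuousAt.continuousWithinAt (by fun_prop (disch := positivity))
  eq z hz := by
    have hz : z ≠ 0 := hz
    simp only [sphericalK₁, sphericalK₁', sphericalK₁'', Pi.zero_apply]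
    field_simp
    ring

lemma sphericalI₁_wronskian (hz : z ≠ 0) :
    z ^ 2 * (sphericalI₁' z * sphericalK₁ z - sphericalI₁ z * sphericalK₁' z) = 1 := by
  simp only [sphericalI₁, sphericalI₁', sphericalK₁, sphericalK₁', cosh_eq, sinh_eq, exp_neg]
  have : exp z ≠ 0 := (exp_pos z).ne'
  field_simp
  ring

end SphericalBessel

lemma greenKernel_eq_sphericalK₁_mul_sphericalI₁ {m R ρ : ℝ} (hm : m ≠ 0) (hR : R ≠ 0)
    (hρ : ρ ≠ 0) :
    exp (-(m * R)) * (1 + 1 / (m * R)) * (cosh (m * ρ) - sinh (m * ρ) / (m * ρ)) /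
      (m * (ρ * R)) = m * sphericalK₁ (m * R) * sphericalI₁ (m * ρ) := by
  simp only [sphericalK₁, sphericalI₁]
  field_simp

/-- The Green's function
`G(r,s) = e^{-mR}(1 + 1/(mR))(cosh(mρ) - sinh(mρ)/(mρ))/(m r s)`, with `R = max(r,s)` and
`ρ = min(r,s)`, inverts the radial Helmholtz operator `-∂² - (2/r)∂ + 2/r² + m²` at angular
momentum `ℓ = 1`: for continuous `φ` with compact support in `(0,∞)`, the function
`u(r) = ∫₀^∞ G(r,s) φ(s) s² ds` is `C²` on `(0,∞)` and satisfies
`-u'' - (2/r)u' + (2/r²)u + m²u = φ` there. -/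
theorem greens_function_radial_helmholtz_ell_one
    (m : ℝ) (hm : 0 < m)
    (φ : ℝ → ℝ) (hφc : Continuous φ) (hφs : HasCompactSupport φ)
    (hφsupp : tsupport φ ⊆ Set.Ioi (0 : ℝ))
    (G : ℝ → ℝ → ℝ)
    (hG : ∀ r ∈ Set.Ioi (0:ℝ), ∀ s ∈ Set.Ioi (0:ℝ),
      G r s = Real.exp (-(m * max r s)) * (1 + 1 / (m * max r s)) *
        (Real.cosh (m * min r s) - Real.sinh (m * min r s) / (m * min r s)) / (m * r * s))
    (u : ℝ → ℝ)
    (hu : ∀ r ∈ Set.Ioi (0:ℝ), u r = ∫ s in Set.Ioi (0:ℝ), G r s * φ s * s ^ 2) :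
    ContDiffOn ℝ 2 u (Set.Ioi (0:ℝ)) ∧
      ∀ r ∈ Set.Ioi (0:ℝ),
        -(deriv (deriv u) r) - (2 / r) * deriv u r + (2 / r ^ 2) * u r + m ^ 2 * u r = φ r := by
  have hm₀ : m ≠ 0 := hm.ne'
  have hIoi : Ioi (0 : ℝ) ⊆ {0}ᶜ := fun x hx => ne_of_gt hx
  have hI := (solvesLinearODEOn_sphericalI₁.comp_const_mul hm₀).mono hIoi
  have hK := (solvesLinearODEOn_sphericalK₁.comp_const_mul hm₀).mono hIoi
  set ψ : ℝ → ℝ := fun s => m * s ^ 2 * φ s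
  have hψ : Continuous ψ := by fun_prop
  have hψU : tsupport ψ ⊆ Ioi 0 := tsupport_mul_subset_right.trans hφsupp
  have hIψ := (HasDerivAt.continuousOn hI.hasDerivAt).continuous_mul_of_tsupport_subset
    isOpen_Ioi hψ hψU
  have hKψ := (HasDerivAt.continuousOn hK.hasDerivAt).continuous_mul_of_tsupport_subset
    isOpen_Ioi hψ hψU
  have hKψi : Integrable fun s => sphericalK₁ (m * s) * ψ s :=
    hKψ.integrable_of_hasCompactSupport hφs.mul_left.mul_left
  have hw := hI.variation_of_parameters hK (f := φ)
    (fun x _ => (hIψ.integral_hasStrictDerivAt 0 x).hasDerivAt)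
    (fun x _ => hasDerivAt_integral_Ioi hKψi hKψ x) hψ.continuousOn
    fun x hx => by
      linear_combination φ x * sphericalI₁_wronskian (mul_ne_zero hm₀ (ne_of_gt hx))
  have hsol := hw.congr isOpen_Ioi (u := u) fun r hr => by
    dsimp only
    rw [hu r hr, ← integral_Ioi_mul_max_min (le_of_lt hr) (hIψ.intervalIntegrable 0 r)
      hKψi.integrableOn]
    refine setIntegral_congr_fun measurableSet_Ioi fun s hs => ?_
    rw [hG r hr s hs, mul_assoc m, ← min_mul_max r s, greenKernel_eq_sphericalK₁_mul_sphericalI₁ hm₀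
      (lt_max_of_lt_left hr).ne' (lt_min hr hs).ne']
    ring
  exact ⟨hsol.contDiffOn isOpen_Ioi, fun r hr => by linear_combination hsol.eq r hr⟩
end
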